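/- arXiv:2212.08347 — 10 statements merged into one kernel-verified Lean document; each statement's English description precedes it below -/
import Mathlib

section
/- The additive group Z × Z satisfies the ACCP as a monoid, but it is not hereditarily atomic: its submonoid M consisting of the nonnegative cone of Z × Z under the lexicographical order with priority in the second coordinate, namely M = {(0,0)} ∪ (Z × positive integers) ∪ (nonnegative integers × {0}), has set of atoms exactly {(1,0)} and is not atomic. -/
/-- `x` is invertible within the subset `S` of the ambient monoid. -/
def SUnit {A : Type*} [AddCommMonoid A] (S : Set A) (x : A) : Prop := ∃ y ∈ S, x + y = 0

/-- `a` is an atom of the subset (submonoid) `S`: it is non-invertible in `S` and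
cannot be written as a sum of two non-invertible elements of `S`. -/
def SAtom {A : Type*} [AddCommMonoid A] (S : Set A) (a : A) : Prop :=
  a ∈ S ∧ ¬ SUnit S a ∧ ∀ b ∈ S, ∀ c ∈ S, a = b + c → SUnit S b ∨ SUnit S c

/-- `x` is an atomic element of `S`: invertible in `S` or a finite sum of atoms of `S`. -/
def SAtomicElem {A : Type*} [AddCommMonoid A] (S : Set A) (x : A) : Prop :=
  SUnit S x ∨ ∃ l : Multiset A, (∀ a ∈ l, SAtom S a) ∧ l.sum = x

/-- The subset (submonoid) `S` is atomic. -/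
def SAtomic {A : Type*} [AddCommMonoid A] (S : Set A) : Prop :=
  ∀ x ∈ S, SAtomicElem S x

/-- Principal ideal `b + M`. -/
def PIdeal {M : Type*} [AddCommMonoid M] (b : M) : Set M := {x | ∃ c, x = b + c}

/-- `M` satisfies the ascending chain condition on principal ideals. -/
def SatisfiesACCP (M : Type*) [AddCommMonoid M] : Prop :=
  ∀ f : ℕ → M, (∀ n, PIdeal (f n) ⊆ PIdeal (f (n + 1))) →
    ∃ N, ∀ n, N ≤ n → PIdeal (f n) = PIdeal (f N)

/-- The nonnegative cone of `ℤ × ℤ` under the lexicographic order with priority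
in the second coordinate: `(x, y) ∈ S₂` iff `y > 0`, or `y = 0` and `x ≥ 0`. -/
def S2 : Set (ℤ × ℤ) := {p | 0 < p.2 ∨ (p.2 = 0 ∧ 0 ≤ p.1)}

lemma mem_S2 (x y : ℤ) : (x, y) ∈ S2 ↔ (0 < y ∨ (y = 0 ∧ 0 ≤ x)) := Iff.rfl

lemma sunit_iff (x : ℤ × ℤ) : SUnit S2 x ↔ (-x) ∈ S2 := by
  constructor
  · rintro ⟨y, hy, hxy⟩
    have h := neg_eq_of_add_eq_zero_right hxy
    rwa [h]
  · intro h; exact ⟨-x, h, add_neg_cancel x⟩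

lemma sunit_iff' (x y : ℤ) : SUnit S2 (x, y) ↔ (y < 0 ∨ (y = 0 ∧ x ≤ 0)) := by
  rw [sunit_iff]; simp only [S2, Set.mem_setOf_eq, Prod.snd_neg, Prod.fst_neg]; omega

lemma pideal_univ (b : ℤ × ℤ) : PIdeal b = Set.univ := by
  ext x; simp only [PIdeal, Set.mem_setOf_eq, Set.mem_univ, iff_true]
  exact ⟨x - b, by ring⟩

lemma atom_iff (a : ℤ × ℤ) : SAtom S2 a ↔ a = ((1 : ℤ), (0 : ℤ)) := by
  obtain ⟨x, y⟩ := a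
  constructor
  · rintro ⟨hmem, hnu, hdec⟩
    rw [sunit_iff'] at hnu
    rw [mem_S2] at hmem
    rcases hmem with hy | ⟨hy, hx⟩
    · exfalso
      have h := hdec (x - 1, y) (by rw [mem_S2]; omega) (1, 0) (by rw [mem_S2]; omega)
        (by simp)
      rw [sunit_iff', sunit_iff'] at h; omega
    · have hx1 : 1 ≤ x := by omega
      by_cases h1 : x = 1
      · simp [h1, hy]
      · exfalso
        have h := hdec (1, 0) (by rw [mem_S2]; omega) (x - 1, y) (by rw [mem_S2]; omega)
          (by simp)
        rw [sunit_iff', sunit_iff'] at h; omega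
  · intro heq
    rw [heq]
    refine ⟨by rw [mem_S2]; omega, by rw [sunit_iff']; omega, ?_⟩
    rintro ⟨b1, b2⟩ hb ⟨c1, c2⟩ hc heq
    rw [mem_S2] at hb hc
    rw [Prod.mk_add_mk, Prod.mk.injEq] at heq
    rw [sunit_iff', sunit_iff']
    omega

/-- `ℤ × ℤ` satisfies the ACCP as a monoid, but its submonoid `S2` (the nonnegative
lex cone with priority in the second coordinate) has set of atoms exactly `{(1, 0)}`
and is not atomic; hence `ℤ × ℤ` is not hereditarily atomic. -/
theorem zxz_accp_not_hereditarily_atomic :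
    SatisfiesACCP (ℤ × ℤ) ∧
    (0 : ℤ × ℤ) ∈ S2 ∧
    (∀ x ∈ S2, ∀ y ∈ S2, x + y ∈ S2) ∧
    {a : ℤ × ℤ | SAtom S2 a} = {((1 : ℤ), (0 : ℤ))} ∧
    ¬ SAtomic S2 := by
  refine ⟨?_, ?_, ?_, ?_, ?_⟩
  · intro f _
    exact ⟨0, fun n _ => by rw [pideal_univ, pideal_univ]⟩
  · exact Or.inr ⟨rfl, le_refl 0⟩
  · rintro ⟨x1, x2⟩ hx ⟨y1, y2⟩ hy
    rw [mem_S2] at hx hy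
    rw [Prod.mk_add_mk, mem_S2]
    omega
  · ext a; simp only [Set.mem_setOf_eq, Set.mem_singleton_iff, atom_iff]
  · intro h
    have h01 := h ((0 : ℤ), (1 : ℤ)) (by rw [mem_S2]; omega)
    rcases h01 with hu | ⟨l, hl, hsum⟩
    · rw [sunit_iff'] at hu; omega
    · have hrep : l = Multiset.replicate l.card ((1 : ℤ), (0 : ℤ)) := by
        rw [Multiset.eq_replicate_card]
        intro b hb
        exact (atom_iff b).mp (hl b hb)
      rw [hrep, Multiset.sum_replicate] at hsum
      have : (Multiset.card l • (((1 : ℤ), (0 : ℤ)) : ℤ × ℤ)).2 = 1 := by rw [hsum]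
      simp at this
end

section
/- Every nearly atomic cancellative commutative monoid is almost atomic. -/
/-- `x` is invertible in the monoid `M`. -/
def IsMUnit {M : Type*} [AddCommMonoid M] (x : M) : Prop := ∃ y, x + y = 0

/-- `a` is an atom of `M`. -/
def IsMAtom {M : Type*} [AddCommMonoid M] (a : M) : Prop :=
  ¬ IsMUnit a ∧ ∀ b c : M, a = b + c → IsMUnit b ∨ IsMUnit c

/-- `x` is atomic: invertible or a finite sum of atoms. -/
def IsAtomicElem {M : Type*} [AddCommMonoid M] (x : M) : Prop :=
  IsMUnit x ∨ ∃ l : Multiset M, (∀ a ∈ l, IsMAtom a) ∧ l.sum = x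

/-- Every nearly atomic cancellative commutative monoid is almost atomic. -/
theorem nearly_atomic_implies_almost_atomic {M : Type*} [AddCancelCommMonoid M]
    (h : ∃ b : M, ∀ c : M, ¬ IsMUnit c → IsAtomicElem (b + c)) :
    ∀ c : M, ¬ IsMUnit c → ∃ b : M, IsAtomicElem b ∧ IsAtomicElem (b + c) := by
  obtain ⟨b, hb⟩ := h
  intro c hc
  refine ⟨b + c, hb c hc, ?_⟩
  have hcc : ¬ IsMUnit (c + c) := by
    rintro ⟨y, hy⟩
    exact hc ⟨c + y, by rw [← add_assoc, hy]⟩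
  have := hb (c + c) hcc
  rwa [← add_assoc] at this
end

section
/- Let M be an additive submonoid of the nonnegative reals such that 0 is not a limit point of M \ {0}. Then M is a bounded factorization monoid: M is atomic and for each b ∈ M the set of lengths of factorizations of b into atoms is finite. -/
/-- An additive submonoid of the nonnegative reals with `0` not a limit point of
its set of nonzero elements is a bounded factorization monoid. -/
theorem submonoid_real_bf (M : AddSubmonoid ℝ)
    (hpos : ∀ x ∈ M, (0 : ℝ) ≤ x)
    (hlim : ∃ ε : ℝ, 0 < ε ∧ ∀ x ∈ M, x ≠ 0 → ε ≤ x) :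
    SAtomic (M : Set ℝ) ∧
    ∀ x ∈ M, ∃ B : ℕ, ∀ l : Multiset ℝ,
      (∀ a ∈ l, SAtom (M : Set ℝ) a) → l.sum = x → l.card ≤ B := by

  obtain ⟨ε, hε, hεM⟩ := hlim
  have hunit : ∀ x ∈ M, (SUnit (M : Set ℝ) x ↔ x = 0) := by
    intro x hx
    constructor
    · rintro ⟨y, hy, hxy⟩
      have h1 := hpos y hy
      have h2 := hpos x hx
      linarith
    · rintro rfl; exact ⟨0, M.zero_mem, add_zero 0⟩
  have hatom_ge : ∀ a, SAtom (M : Set ℝ) a → ε ≤ a := by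
    rintro a ⟨ha, hna, -⟩
    exact hεM a ha (fun h => hna ((hunit a ha).2 h))
  have key : ∀ n : ℕ, ∀ x ∈ M, x ≤ n * ε → SAtomicElem (M : Set ℝ) x := by
    intro n
    induction n with
    | zero =>
      intro x hx hle
      have hx0 : x = 0 := le_antisymm (by simpa using hle) (hpos x hx)
      exact Or.inl ((hunit x hx).2 hx0)
    | succ n ih =>
      intro x hx hle
      by_cases hx0 : x = 0
      · exact Or.inl ((hunit x hx).2 hx0)
      by_cases hA : SAtom (M : Set ℝ) x
      · exact Or.inr ⟨{x}, by simpa using hA, by simp⟩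
      · have hnu : ¬ SUnit (M : Set ℝ) x := fun h => hx0 ((hunit x hx).1 h)
        unfold SAtom at hA
        push_neg at hA
        obtain ⟨b, hb, c, hc, hxbc, hnb, hnc⟩ := hA hx hnu
        have hb0 : b ≠ 0 := fun h => hnb ((hunit b hb).2 h)
        have hc0 : c ≠ 0 := fun h => hnc ((hunit c hc).2 h)
        have hbε := hεM b hb hb0
        have hcε := hεM c hc hc0
        have hbn : b ≤ n * ε := by
          have : (n + 1 : ℕ) * ε = n * ε + ε := by push_cast; ring
          rw [this] at hle; linarith
        have hcn : c ≤ n * ε := by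
          have : (n + 1 : ℕ) * ε = n * ε + ε := by push_cast; ring
          rw [this] at hle; linarith
        have hab := ih b hb hbn
        have hac := ih c hc hcn
        rcases hab with h | ⟨lb, hlb, hlbs⟩
        · exact absurd h hnb
        rcases hac with h | ⟨lc, hlc, hlcs⟩
        · exact absurd h hnc
        refine Or.inr ⟨lb + lc, ?_, ?_⟩
        · intro a ha
          rcases Multiset.mem_add.1 ha with h | h
          · exact hlb a h
          · exact hlc a h
        · rw [Multiset.sum_add, hlbs, hlcs, hxbc]
  constructor
  · intro x hx
    obtain ⟨n, hn⟩ := exists_nat_ge (x / ε)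
    have hxn : x ≤ n * ε := by
      rw [div_le_iff₀ hε] at hn; linarith
    exact key n x hx hxn
  · intro x hx
    refine ⟨⌈x / ε⌉₊, ?_⟩
    intro l hl hsum
    have hcard : (l.card : ℝ) * ε ≤ l.sum := by
      have := Multiset.card_nsmul_le_sum (fun a ha => hatom_ge a (hl a ha))
      simpa [nsmul_eq_mul] using this
    have : (l.card : ℝ) ≤ x / ε := by
      rw [le_div_iff₀ hε]; linarith [hsum ▸ hcard]
    calc l.card ≤ ⌈(l.card : ℝ)⌉₊ := by simp
      _ ≤ ⌈x / ε⌉₊ := Nat.ceil_le_ceil this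
end

section
/- Let q be a rational number with 0 < q < 1 whose denominator in lowest terms is at least 2 (i.e., 1/q is not an integer), and let M_q be the additive submonoid of the nonnegative rationals generated by {q^n : n ≥ 0}. Then M_q does not satisfy the ACCP; in fact, the ascending chain of principal ideals (d·q^n + M_q) for n ≥ 0, where d is the denominator of q, does not stabilize. -/
/-- Principal ideal `b + S` of an element `b` of the submonoid given by the subset `S`. -/
def PIdealIn (S : Set ℚ) (b : ℚ) : Set ℚ := {x | ∃ c ∈ S, x = b + c}

/-- The submonoid given by the subset `S` satisfies the ACCP. -/
def ACCPIn (S : Set ℚ) : Prop :=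
  ∀ f : ℕ → ℚ, (∀ n, f n ∈ S) →
    (∀ n, PIdealIn S (f n) ⊆ PIdealIn S (f (n + 1))) →
    ∃ N, ∀ n, N ≤ n → PIdealIn S (f n) = PIdealIn S (f N)

/-!
Writing `q = n/d` in lowest terms, `d·qᵏ = d·qᵏ⁺¹ + (d - n)·qᵏ` with `(d - n)·qᵏ ∈ M_q`, so
`d·qᵏ + M_q ⊆ d·qᵏ⁺¹ + M_q`. The inclusion is strict because `M_q` consists of nonnegative
numbers, so every element of `b + M_q` is at least `b`, while `d·qᵏ⁺¹ < d·qᵏ`.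
-/

theorem PIdealIn_add_subset {M : AddSubmonoid ℚ} {b c : ℚ} (hc : c ∈ M) :
    PIdealIn M (b + c) ⊆ PIdealIn M b := by
  rintro x ⟨c', hc', rfl⟩
  exact ⟨c + c', M.add_mem hc hc', add_assoc b c c'⟩

theorem self_mem_PIdealIn {S : Set ℚ} (hS : (0 : ℚ) ∈ S) (b : ℚ) : b ∈ PIdealIn S b :=
  ⟨0, hS, (add_zero b).symm⟩

theorem le_of_mem_PIdealIn {S : Set ℚ} (hS : ∀ x ∈ S, 0 ≤ x) {a b : ℚ}
    (h : a ∈ PIdealIn S b) : b ≤ a := by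
  obtain ⟨c, hc, rfl⟩ := h
  exact le_add_of_nonneg_right (hS c hc)

theorem AddSubmonoid.intCast_mul_mem {M : AddSubmonoid ℚ} {x : ℚ} (hx : x ∈ M) {m : ℤ}
    (hm : 0 ≤ m) : (m : ℚ) * x ∈ M := by
  lift m to ℕ using hm
  simpa [nsmul_eq_mul] using M.nsmul_mem hx m

theorem Rat.den_mul_pow_eq (q : ℚ) (n : ℕ) :
    (q.den : ℚ) * q ^ n = q.den * q ^ (n + 1) + ((q.den - q.num : ℤ) : ℚ) * q ^ n := by
  rw [pow_succ, ← mul_assoc, mul_right_comm, Rat.den_mul_eq_num]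
  push_cast
  ring

theorem PIdealIn_den_mul_pow_subset {M : AddSubmonoid ℚ} {q : ℚ} (hq : q ≤ 1) {n : ℕ}
    (hqn : q ^ n ∈ M) :
    PIdealIn M ((q.den : ℚ) * q ^ n) ⊆ PIdealIn M ((q.den : ℚ) * q ^ (n + 1)) := by
  rw [Rat.den_mul_pow_eq q n]
  exact PIdealIn_add_subset <|
    M.intCast_mul_mem hqn (sub_nonneg.mpr (Rat.num_le_denom_iff.mpr hq))

theorem den_mul_pow_succ_not_mem_PIdealIn {S : Set ℚ} (hS : ∀ x ∈ S, 0 ≤ x) {q : ℚ}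
    (h0 : 0 < q) (h1 : q < 1) (n : ℕ) :
    (q.den : ℚ) * q ^ (n + 1) ∉ PIdealIn S ((q.den : ℚ) * q ^ n) := fun h =>
  (le_of_mem_PIdealIn hS h).not_gt <|
    mul_lt_mul_of_pos_left (pow_lt_pow_right_of_lt_one₀ h0 h1 n.lt_succ_self)
      (by exact_mod_cast q.den_pos)

theorem AddSubmonoid.nonneg_of_mem_closure {s : Set ℚ} (hs : ∀ x ∈ s, 0 ≤ x) :
    ∀ x ∈ AddSubmonoid.closure s, 0 ≤ x := fun _ hx =>
  AddSubmonoid.closure_le (S := AddSubmonoid.nonneg ℚ).mpr hs hx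

theorem Mq_not_accp_general (q : ℚ) (h0 : 0 < q) (h1 : q < 1) :
    (∀ n : ℕ,
      PIdealIn (AddSubmonoid.closure {x : ℚ | ∃ n : ℕ, x = q ^ n} : Set ℚ)
        ((q.den : ℚ) * q ^ n) ⊆
      PIdealIn (AddSubmonoid.closure {x : ℚ | ∃ n : ℕ, x = q ^ n} : Set ℚ)
        ((q.den : ℚ) * q ^ (n + 1))) ∧
    (¬ ∃ N : ℕ, ∀ n, N ≤ n →
      PIdealIn (AddSubmonoid.closure {x : ℚ | ∃ n : ℕ, x = q ^ n} : Set ℚ)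
        ((q.den : ℚ) * q ^ n) =
      PIdealIn (AddSubmonoid.closure {x : ℚ | ∃ n : ℕ, x = q ^ n} : Set ℚ)
        ((q.den : ℚ) * q ^ N)) ∧
    ¬ ACCPIn (AddSubmonoid.closure {x : ℚ | ∃ n : ℕ, x = q ^ n} : Set ℚ) := by
  set M := AddSubmonoid.closure {x : ℚ | ∃ n : ℕ, x = q ^ n}
  have pow_mem (n : ℕ) : q ^ n ∈ M := AddSubmonoid.subset_closure ⟨n, rfl⟩
  have chain (n : ℕ) := PIdealIn_den_mul_pow_subset h1.le (pow_mem n)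
  have not_stable : ¬ ∃ N : ℕ, ∀ n, N ≤ n →
      PIdealIn M ((q.den : ℚ) * q ^ n) = PIdealIn M ((q.den : ℚ) * q ^ N) := by
    rintro ⟨N, hN⟩
    have M_nonneg : ∀ x ∈ M, 0 ≤ x :=
      AddSubmonoid.nonneg_of_mem_closure (by rintro _ ⟨n, rfl⟩; positivity)
    apply den_mul_pow_succ_not_mem_PIdealIn M_nonneg h0 h1 N
    rw [← hN (N + 1) N.le_succ]
    exact self_mem_PIdealIn M.zero_mem _
  have den_mul_pow_mem (n : ℕ) : (q.den : ℚ) * q ^ n ∈ M := by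
    simpa [nsmul_eq_mul] using M.nsmul_mem (pow_mem n) q.den
  exact ⟨chain, not_stable, fun h => not_stable (h _ den_mul_pow_mem chain)⟩

/-- For rational `0 < q < 1` with `1/q` not an integer, the Puiseux monoid
`M_q = ⟨qⁿ : n ≥ 0⟩` does not satisfy the ACCP; indeed the ascending chain of
principal ideals `d·qⁿ + M_q` (where `d` is the denominator of `q`) does not
stabilize. -/
theorem Mq_not_accp (q : ℚ) (h0 : 0 < q) (h1 : q < 1)
    (hint : ¬ ∃ n : ℤ, q⁻¹ = (n : ℚ)) :
    (∀ n : ℕ,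
      PIdealIn (AddSubmonoid.closure {x : ℚ | ∃ n : ℕ, x = q ^ n} : Set ℚ)
        ((q.den : ℚ) * q ^ n) ⊆
      PIdealIn (AddSubmonoid.closure {x : ℚ | ∃ n : ℕ, x = q ^ n} : Set ℚ)
        ((q.den : ℚ) * q ^ (n + 1))) ∧
    (¬ ∃ N : ℕ, ∀ n, N ≤ n →
      PIdealIn (AddSubmonoid.closure {x : ℚ | ∃ n : ℕ, x = q ^ n} : Set ℚ)
        ((q.den : ℚ) * q ^ n) =
      PIdealIn (AddSubmonoid.closure {x : ℚ | ∃ n : ℕ, x = q ^ n} : Set ℚ)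
        ((q.den : ℚ) * q ^ N)) ∧
    ¬ ACCPIn (AddSubmonoid.closure {x : ℚ | ∃ n : ℕ, x = q ^ n} : Set ℚ) :=
  Mq_not_accp_general q h0 h1
end

section
/- Let M_0 be the additive submonoid of the nonnegative rationals generated by the reciprocals of the prime numbers. Then the set of atoms of M_0 is exactly {1/p : p prime}, and M_0 is not a bounded factorization monoid because the set of factorization lengths of the element 1 contains every prime number. -/
open AddSubmonoid

section PositiveGenerators

variable {A : Type*} [AddCommMonoid A] [PartialOrder A] [IsOrderedAddMonoid A] {G : Set A}

theorem nonneg_of_mem_closure (hG : ∀ x ∈ G, 0 < x) {x : A} (hx : x ∈ closure G) :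
    0 ≤ x := by
  induction hx using closure_induction with
  | mem y hy => exact (hG y hy).le
  | zero => exact le_rfl
  | add _ _ _ _ ha hb => exact add_nonneg ha hb

theorem sUnit_closure_iff (hG : ∀ x ∈ G, 0 < x) {x : A} (hx : x ∈ closure G) :
    SUnit (closure G : Set A) x ↔ x = 0 := by
  refine ⟨fun ⟨y, hy, hxy⟩ => ?_, fun h => ⟨0, zero_mem _, by rw [h, add_zero]⟩⟩
  exact ((add_eq_zero_iff_of_nonneg (nonneg_of_mem_closure hG hx)
    (nonneg_of_mem_closure hG hy)).1 hxy).1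

theorem mem_of_sAtom_closure (hG : ∀ x ∈ G, 0 < x) {a : A} (ha : SAtom (closure G : Set A) a) :
    a ∈ G := by
  obtain ⟨haS, hnu, hirr⟩ := ha
  obtain ⟨l, hlG, rfl⟩ := exists_multiset_of_mem_closure haS
  rcases Multiset.empty_or_exists_mem l with rfl | ⟨b, hb⟩
  · exact absurd ((sUnit_closure_iff hG haS).2 Multiset.sum_zero) hnu
  obtain ⟨t, rfl⟩ := Multiset.exists_cons_of_mem hb
  have hbS : b ∈ closure G := subset_closure (hlG b hb)
  have htS : t.sum ∈ closure G :=
    multiset_sum_mem _ t fun y hy => subset_closure (hlG y (Multiset.mem_cons_of_mem hy))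
  rcases hirr b hbS t.sum htS (Multiset.sum_cons b t) with hbu | htu
  · exact absurd ((sUnit_closure_iff hG hbS).1 hbu) (hG b (hlG b hb)).ne'
  · rw [Multiset.sum_cons, (sUnit_closure_iff hG htS).1 htu, add_zero]
    exact hlG b hb

theorem sAtom_closure_of_factorization_unique (hG : ∀ x ∈ G, 0 < x) {g : A} (hg : g ∈ G)
    (huniq : ∀ l : Multiset A, (∀ x ∈ l, x ∈ G) → l.sum = g → l = {g}) :
    SAtom (closure G : Set A) g := by
  have hgS : g ∈ closure G := subset_closure hg
  refine ⟨hgS, fun hu => (hG g hg).ne' ((sUnit_closure_iff hG hgS).1 hu), ?_⟩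
  intro b hbS c hcS hbc
  by_contra! hnu
  obtain ⟨lb, hlbG, rfl⟩ := exists_multiset_of_mem_closure hbS
  obtain ⟨lc, hlcG, rfl⟩ := exists_multiset_of_mem_closure hcS
  have hlb : lb ≠ 0 := by rintro rfl; exact hnu.1 ((sUnit_closure_iff hG hbS).2 rfl)
  have hlc : lc ≠ 0 := by rintro rfl; exact hnu.2 ((sUnit_closure_iff hG hcS).2 rfl)
  have hcard := congrArg Multiset.card <| huniq (lb + lc)
    (fun x hx => (Multiset.mem_add.1 hx).elim (hlbG x) (hlcG x))
    (by rw [Multiset.sum_add, hbc])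
  rw [Multiset.card_add, Multiset.card_singleton] at hcard
  have := Multiset.card_pos.2 hlb
  have := Multiset.card_pos.2 hlc
  omega

end PositiveGenerators

def factorizationLengths {A : Type*} [AddCommMonoid A] (S : Set A) (x : A) : Set ℕ :=
  {n | ∃ l : Multiset A, (∀ a ∈ l, SAtom S a) ∧ l.sum = x ∧ l.card = n}

theorem Rat.prime_not_dvd_den_multiset_sum {p : ℕ} (hp : p.Prime) {l : Multiset ℚ}
    (hl : ∀ x ∈ l, ¬ p ∣ x.den) : ¬ p ∣ l.sum.den := by
  induction l using Multiset.induction with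
  | empty => simpa using hp.one_lt.ne'
  | cons a s ih =>
    rw [Multiset.sum_cons]
    intro hdvd
    rcases hp.dvd_mul.1 (hdvd.trans (Rat.add_den_dvd a s.sum)) with ha | hs
    · exact hl a (Multiset.mem_cons_self a s) ha
    · exact ih (fun x hx => hl x (Multiset.mem_cons_of_mem hx)) hs

def primeReciprocals : Set ℚ := {x | ∃ p : ℕ, p.Prime ∧ x = 1 / p}

theorem one_div_prime_mem_primeReciprocals {p : ℕ} (hp : p.Prime) :
    (1 : ℚ) / p ∈ primeReciprocals :=
  ⟨p, hp, rfl⟩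

theorem pos_of_mem_primeReciprocals {x : ℚ} (hx : x ∈ primeReciprocals) : 0 < x := by
  obtain ⟨p, hp, rfl⟩ := hx
  have : (0 : ℚ) < p := by exact_mod_cast hp.pos
  positivity

theorem den_one_div_prime {p : ℕ} (hp : p.Prime) : ((1 : ℚ) / p).den = p := by
  rw [one_div, Rat.inv_natCast_den_of_pos hp.pos]

theorem eq_singleton_of_sum_eq_one_div_prime {p : ℕ} (hp : p.Prime) {l : Multiset ℚ}
    (hl : ∀ x ∈ l, x ∈ primeReciprocals) (hs : l.sum = 1 / p) : l = {(1 : ℚ) / p} := by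
  have hmem : (1 : ℚ) / p ∈ l := by
    by_contra hnot
    refine Rat.prime_not_dvd_den_multiset_sum hp (fun x hx => ?_)
      (by rw [hs, den_one_div_prime hp])
    obtain ⟨q, hq, rfl⟩ := hl x hx
    rw [den_one_div_prime hq]
    intro hpq
    rw [(Nat.prime_dvd_prime_iff_eq hp hq).1 hpq] at hnot
    exact hnot hx
  obtain ⟨t, rfl⟩ := Multiset.exists_cons_of_mem hmem
  have ht : t.sum = 0 := by simpa using hs
  rcases Multiset.empty_or_exists_mem t with rfl | ⟨x, hx⟩
  · rfl
  · have htpos : ∀ y ∈ t, 0 < y := fun y hy =>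
      pos_of_mem_primeReciprocals (hl y (Multiset.mem_cons_of_mem hy))
    have := Multiset.single_le_sum (fun y hy => (htpos y hy).le) x hx
    linarith [htpos x hx]

theorem setOf_sAtom_closure_primeReciprocals :
    {a : ℚ | SAtom (AddSubmonoid.closure primeReciprocals : Set ℚ) a} = primeReciprocals := by
  ext a
  refine ⟨mem_of_sAtom_closure fun _ => pos_of_mem_primeReciprocals, ?_⟩
  rintro ⟨p, hp, rfl⟩
  exact sAtom_closure_of_factorization_unique (fun _ => pos_of_mem_primeReciprocals)
    (one_div_prime_mem_primeReciprocals hp) fun _ => eq_singleton_of_sum_eq_one_div_prime hp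

theorem prime_mem_factorizationLengths_one {p : ℕ} (hp : p.Prime) :
    p ∈ factorizationLengths (AddSubmonoid.closure primeReciprocals : Set ℚ) 1 := by
  refine ⟨Multiset.replicate p ((1 : ℚ) / p), fun a ha => ?_, ?_, Multiset.card_replicate _ _⟩
  · rw [Multiset.eq_of_mem_replicate ha]
    exact setOf_sAtom_closure_primeReciprocals.ge (one_div_prime_mem_primeReciprocals hp)
  · have : (p : ℚ) ≠ 0 := by exact_mod_cast hp.ne_zero
    rw [Multiset.sum_replicate, nsmul_eq_mul, mul_one_div, div_self this]

/-- The Puiseux monoid `M₀ = ⟨1/p : p prime⟩` has set of atoms `{1/p : p prime}`,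
every prime `p` is a factorization length of the element `1`, and consequently
`M₀` is not a bounded factorization monoid. -/
theorem reciprocals_of_primes_not_bf :
    {a : ℚ | SAtom (AddSubmonoid.closure {x : ℚ | ∃ p : ℕ, p.Prime ∧ x = 1 / p} : Set ℚ) a}
      = {x : ℚ | ∃ p : ℕ, p.Prime ∧ x = 1 / p} ∧
    (∀ p : ℕ, p.Prime → ∃ l : Multiset ℚ,
      (∀ a ∈ l, SAtom
        (AddSubmonoid.closure {x : ℚ | ∃ p : ℕ, p.Prime ∧ x = 1 / p} : Set ℚ) a) ∧
      l.sum = 1 ∧ l.card = p) ∧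
    ¬ Set.Finite {n : ℕ | ∃ l : Multiset ℚ,
      (∀ a ∈ l, SAtom
        (AddSubmonoid.closure {x : ℚ | ∃ p : ℕ, p.Prime ∧ x = 1 / p} : Set ℚ) a) ∧
      l.sum = 1 ∧ l.card = n} :=
  ⟨setOf_sAtom_closure_primeReciprocals, fun _ => prime_mem_factorizationLengths_one,
    Nat.infinite_setOfPred_prime.mono fun _ => prime_mem_factorizationLengths_one⟩
end

section
/- Let G be a nontrivial totally ordered abelian group, let a be a positive element of G, and let M_a = {0} ∪ {g ∈ G : g ≥ a}. Then the set of atoms of M_a is exactly the interval [a, 2a) = {g ∈ G : a ≤ g < 2a}. -/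
lemma nonneg_of_mem_zero_union_Ici {G : Type*} [Zero G] [Preorder G] {a x : G} (ha : 0 ≤ a)
    (hx : x ∈ ({0} ∪ Set.Ici a : Set G)) : 0 ≤ x := by
  rcases hx with rfl | hx
  · exact le_rfl
  · exact ha.trans hx

section ConductiveMonoid

variable {G : Type*} [AddCommGroup G] [LinearOrder G] [IsOrderedAddMonoid G] {a x : G}

lemma sUnit_zero_union_Ici_iff (ha : 0 ≤ a) (hx : x ∈ ({0} ∪ Set.Ici a : Set G)) :
    SUnit ({0} ∪ Set.Ici a : Set G) x ↔ x = 0 := by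
  constructor
  · rintro ⟨y, hy, hxy⟩
    exact ((add_eq_zero_iff_of_nonneg (nonneg_of_mem_zero_union_Ici ha hx)
      (nonneg_of_mem_zero_union_Ici ha hy)).mp hxy).1
  · rintro rfl
    exact ⟨0, Or.inl rfl, add_zero 0⟩

lemma not_sUnit_of_le (ha : 0 < a) (hx : a ≤ x) : ¬ SUnit ({0} ∪ Set.Ici a : Set G) x := by
  rw [sUnit_zero_union_Ici_iff ha.le (Or.inr hx)]
  exact (ha.trans_le hx).ne'

lemma sAtom_of_mem_Ico (ha : 0 < a) (hx : x ∈ Set.Ico a (a + a)) :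
    SAtom ({0} ∪ Set.Ici a : Set G) x := by
  refine ⟨Or.inr hx.1, not_sUnit_of_le ha hx.1, ?_⟩
  rintro b hb c hc rfl
  rw [sUnit_zero_union_Ici_iff ha.le hb, sUnit_zero_union_Ici_iff ha.le hc]
  rcases hb with hb | hb
  · exact Or.inl hb
  rcases hc with hc | hc
  · exact Or.inr hc
  exact absurd hx.2 (add_le_add hb hc).not_gt

lemma mem_Ico_of_sAtom (ha : 0 < a) (hx : SAtom ({0} ∪ Set.Ici a : Set G) x) :
    x ∈ Set.Ico a (a + a) := by
  obtain ⟨hxM, hnu, hsplit⟩ := hx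
  have hax : a ≤ x := by
    rcases hxM with rfl | hax
    · exact absurd ⟨0, Or.inl rfl, add_zero 0⟩ hnu
    · exact hax
  refine ⟨hax, lt_of_not_ge fun h2a => ?_⟩
  have hxa : a ≤ x - a := le_sub_iff_add_le.mpr h2a
  rcases hsplit a (Or.inr le_rfl) (x - a) (Or.inr hxa) (add_sub_cancel a x).symm with h | h
  · exact not_sUnit_of_le ha le_rfl h
  · exact not_sUnit_of_le ha hxa h

end ConductiveMonoid

theorem atoms_of_conductive_monoid_general {G : Type*} [AddCommGroup G] [LinearOrder G]
    [IsOrderedAddMonoid G] (a : G) (ha : 0 < a) :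
    {x : G | SAtom ({0} ∪ Set.Ici a : Set G) x} = Set.Ico a (a + a) := by
  ext x
  exact ⟨mem_Ico_of_sAtom ha, sAtom_of_mem_Ico ha⟩

/-- In a nontrivial totally ordered abelian group `G` with `a > 0`, the set of
atoms of the conductive positive monoid `M_a = {0} ∪ G_{≥ a}` is exactly the
interval `[a, 2a)`. -/
theorem atoms_of_conductive_monoid {G : Type*} [AddCommGroup G] [LinearOrder G]
    [IsOrderedAddMonoid G] [Nontrivial G] (a : G) (ha : 0 < a) :
    {x : G | SAtom ({0} ∪ Set.Ici a : Set G) x} = Set.Ico a (a + a) :=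
  atoms_of_conductive_monoid_general a ha
end

section
/- Let G be a nontrivial totally ordered abelian group, let a > 0 in G, and let M_a = {0} ∪ {g ∈ G : g ≥ a}. If M_a is quasi-atomic, then every nonzero element b of M_a is Archimedean-equivalent to a, i.e., b ≤ n·a for some positive integer n. -/
/-!
An element `x ≥ a + a` of `M_a` splits as `a + (x - a)` with both summands in `M_a`, so every
atom of `M_a` is at most `2 • a`. If `b ≠ 0` and `d + b` is a sum of `n` atoms, then
`b ≤ d + b ≤ n • (2 • a)`.
-/

section PositiveSubset

variable {A : Type*} [AddCommMonoid A] [PartialOrder A] [IsOrderedAddMonoid A] {S : Set A}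

theorem not_sUnit_of_pos (hS : ∀ y ∈ S, 0 ≤ y) {x : A} (hx : 0 < x) : ¬ SUnit S x := by
  rintro ⟨y, hy, hxy⟩
  exact (add_pos_of_pos_of_nonneg hx (hS y hy)).ne' hxy

theorem SAtomicElem.exists_le_nsmul (hS : ∀ y ∈ S, 0 ≤ y) {c x : A}
    (hatom : ∀ y, SAtom S y → y ≤ c) (hx : 0 < x) (h : SAtomicElem S x) :
    ∃ n : ℕ, 0 < n ∧ x ≤ n • c := by
  rcases h with hunit | ⟨l, hl, rfl⟩
  · exact absurd hunit (not_sUnit_of_pos hS hx)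
  · refine ⟨Multiset.card l, Multiset.card_pos.2 ?_,
      l.sum_le_card_nsmul c fun y hy ↦ hatom y (hl y hy)⟩
    rintro rfl
    exact hx.ne' Multiset.sum_zero.symm

end PositiveSubset

def conductiveMonoid {G : Type*} [Zero G] [Preorder G] (a : G) : Set G := {0} ∪ Set.Ici a

theorem nonneg_of_mem_conductiveMonoid {G : Type*} [Zero G] [Preorder G] {a x : G} (ha : 0 ≤ a)
    (hx : x ∈ conductiveMonoid a) : 0 ≤ x :=
  hx.elim (fun h ↦ (Set.mem_singleton_iff.1 h).ge) ha.trans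

theorem SAtom.le_two_nsmul_of_conductiveMonoid {G : Type*} [AddCommGroup G] [LinearOrder G]
    [IsOrderedAddMonoid G] {a x : G} (ha : 0 < a) (hx : SAtom (conductiveMonoid a) x) :
    x ≤ 2 • a := by
  obtain ⟨-, -, hsplit⟩ := hx
  by_contra! hlt
  have hxa : a ≤ x - a := le_sub_iff_add_le.2 (two_nsmul a ▸ hlt.le)
  have hnonneg := fun y ↦ nonneg_of_mem_conductiveMonoid (x := y) ha.le
  rcases hsplit a (Or.inr le_rfl) (x - a) (Or.inr hxa) (add_sub_cancel a x).symm with hu | hu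
  · exact not_sUnit_of_pos hnonneg ha hu
  · exact not_sUnit_of_pos hnonneg (ha.trans_le hxa) hu

theorem quasi_atomic_conductive_implies_archimedean_general {G : Type*}
    [AddCommGroup G] [LinearOrder G] [IsOrderedAddMonoid G] (a : G) (ha : 0 < a)
    (hqa : ∀ c ∈ ({0} ∪ Set.Ici a : Set G), c ≠ 0 →
      ∃ b ∈ ({0} ∪ Set.Ici a : Set G), SAtomicElem ({0} ∪ Set.Ici a : Set G) (b + c)) :
    ∀ b ∈ ({0} ∪ Set.Ici a : Set G), b ≠ 0 → ∃ n : ℕ, 0 < n ∧ b ≤ n • a := by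
  intro b hb hb0
  have hnonneg : ∀ y ∈ conductiveMonoid a, 0 ≤ y :=
    fun y ↦ nonneg_of_mem_conductiveMonoid ha.le
  obtain ⟨d, hd, hatomic⟩ := hqa b hb hb0
  have hb_le : b ≤ d + b := le_add_of_nonneg_left (hnonneg d hd)
  have hb_pos : 0 < b := (hnonneg b hb).lt_of_ne' hb0
  obtain ⟨n, hn, hle⟩ := hatomic.exists_le_nsmul hnonneg
    (fun y hy ↦ hy.le_two_nsmul_of_conductiveMonoid ha) (hb_pos.trans_le hb_le)
  refine ⟨n * 2, by omega, ?_⟩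
  rw [mul_nsmul']
  exact hb_le.trans hle

/-- If the conductive positive monoid `M_a = {0} ∪ G_{≥ a}` of a nontrivial totally
ordered abelian group is quasi-atomic, then every nonzero element of `M_a` is
Archimedean-equivalent to `a`, i.e. bounded above by a positive multiple of `a`. -/
theorem quasi_atomic_conductive_implies_archimedean {G : Type*}
    [AddCommGroup G] [LinearOrder G] [IsOrderedAddMonoid G] [Nontrivial G] (a : G) (ha : 0 < a)
    (hqa : ∀ c ∈ ({0} ∪ Set.Ici a : Set G), c ≠ 0 →
      ∃ b ∈ ({0} ∪ Set.Ici a : Set G), SAtomicElem ({0} ∪ Set.Ici a : Set G) (b + c)) :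
    ∀ b ∈ ({0} ∪ Set.Ici a : Set G), b ≠ 0 → ∃ n : ℕ, 0 < n ∧ b ≤ n • a :=
  quasi_atomic_conductive_implies_archimedean_general a ha hqa
end

section
/- Let M be the additive submonoid of Q_{≥0} generated by S = {x ∈ Z[1/2] : x ≥ 0} ∪ {x ∈ Z[1/3] : x ≥ 4/3}. Then the denominator of every atom of M is a power of 3; in particular every atom of M lies in Z[1/3], and 1/2 ∈ M does not belong to the difference group of the submonoid generated by the atoms of M, so M is not almost atomic. Moreover M is quasi-atomic. -/
/-- The generating set `S = Z[1/2]_{≥0} ∪ Z[1/3]_{≥4/3}`. -/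
def S16 : Set ℚ :=
  {x : ℚ | (0 ≤ x ∧ ∃ a : ℤ, ∃ k : ℕ, x = (a : ℚ) / 2 ^ k) ∨
           ((4 : ℚ) / 3 ≤ x ∧ ∃ a : ℤ, ∃ k : ℕ, x = (a : ℚ) / 3 ^ k)}

/-- The Puiseux monoid `M = ⟨Z[1/2]_{≥0} ∪ Z[1/3]_{≥4/3}⟩`. -/
def M16 : Set ℚ := (AddSubmonoid.closure S16 : Set ℚ)

/-! Every element of `M16` is `x + y` with `x ∈ ℤ[1/2]`, `x ≥ 0`, and `y` either `0` or in
`ℤ[1/3]_{≥4/3}`. A nonzero dyadic part can be halved, so atoms are triadic; hence so is every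
difference of two sums of atoms, which excludes `1/2`, and `b`, `b + 1/2` are never both atomic.
Elements below `4/3` are dyadic, so `4/3` is an atom, and some multiple `k • c + c` of any
nonzero `c` is a multiple of `4/3`. -/

section PositiveMonoid

variable {α : Type*} [AddCommMonoid α] [PartialOrder α] [IsOrderedAddMonoid α] {M : AddSubmonoid α}

theorem sUnit_iff_eq_zero (hM : M ≤ AddSubmonoid.nonneg α) {x : α} (hx : x ∈ M) :
    SUnit M x ↔ x = 0 :=
  ⟨fun ⟨y, hy, hxy⟩ => ((add_eq_zero_iff_of_nonneg (hM hx) (hM hy)).1 hxy).1,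
    fun h => ⟨0, M.zero_mem, by rw [h, add_zero]⟩⟩

theorem sAtom_iff (hM : M ≤ AddSubmonoid.nonneg α) {a : α} :
    SAtom M a ↔ a ∈ M ∧ a ≠ 0 ∧ ∀ b ∈ M, ∀ c ∈ M, a = b + c → b = 0 ∨ c = 0 := by
  refine and_congr_right fun ha => and_congr (not_congr (sUnit_iff_eq_zero hM ha)) ?_
  refine forall₂_congr fun b hb => forall₂_congr fun c hc => ?_
  rw [sUnit_iff_eq_zero hM hb, sUnit_iff_eq_zero hM hc]

theorem sAtomicElem_iff (hM : M ≤ AddSubmonoid.nonneg α) {x : α} (hx : x ∈ M) :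
    SAtomicElem M x ↔ ∃ l : Multiset α, (∀ a ∈ l, SAtom M a) ∧ l.sum = x := by
  refine or_iff_right_of_imp fun hu => ⟨0, by simp, ?_⟩
  rw [(sUnit_iff_eq_zero hM hx).1 hu, Multiset.sum_zero]

end PositiveMonoid

theorem exists_nsmul_add_self_eq_nsmul {a c : ℚ} (ha : 0 < a) (hc : 0 < c) :
    ∃ k m : ℕ, k • c + c = m • a := by
  obtain ⟨p, hp⟩ := Int.eq_ofNat_of_zero_le (Rat.num_pos.2 ha).le
  obtain ⟨q, hq⟩ := Int.eq_ofNat_of_zero_le (Rat.num_pos.2 hc).le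
  have hp0 : p ≠ 0 := by rintro rfl; exact (Rat.num_pos.2 ha).ne' hp
  -- both sides become `a.num * c.num`
  refine ⟨p * c.den - 1, q * a.den, ?_⟩
  rw [← succ_nsmul, Nat.sub_add_cancel (Nat.one_le_iff_ne_zero.2 (mul_ne_zero hp0 c.den_ne_zero)),
    nsmul_eq_mul, nsmul_eq_mul]
  push_cast
  rw [mul_assoc, Rat.den_mul_eq_num, mul_assoc, Rat.den_mul_eq_num, hp, hq]
  push_cast
  ring

theorem exists_add_sAtomicElem_of_sAtom {M : AddSubmonoid ℚ} (hM : M ≤ AddSubmonoid.nonneg ℚ)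
    {a : ℚ} (ha : SAtom M a) {c : ℚ} (hc : c ∈ M) (hc0 : c ≠ 0) :
    ∃ b ∈ M, SAtomicElem M (b + c) := by
  obtain ⟨ha, ha0, -⟩ := (sAtom_iff hM).1 ha
  obtain ⟨k, m, hkm⟩ := exists_nsmul_add_self_eq_nsmul
    ((hM ha).lt_of_ne' ha0) ((hM hc).lt_of_ne' hc0)
  refine ⟨k • c, M.nsmul_mem hc k, Or.inr ⟨Multiset.replicate m a, ?_, ?_⟩⟩
  · intro x hx
    rwa [Multiset.eq_of_mem_replicate hx]
  · rw [Multiset.sum_replicate, hkm]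

/-- `ℤ[1/p]` as a subring of `ℚ`. -/
def intInv (p : ℕ) : Subring ℚ where
  carrier := {x | ∃ a : ℤ, ∃ k : ℕ, x = a / (p : ℚ) ^ k}
  mul_mem' := by
    rintro _ _ ⟨a, k, rfl⟩ ⟨b, j, rfl⟩
    exact ⟨a * b, k + j, by push_cast; rw [pow_add, div_mul_div_comm]⟩
  one_mem' := ⟨1, 0, by simp⟩
  add_mem' := by
    rintro _ _ ⟨a, k, rfl⟩ ⟨b, j, rfl⟩
    -- for `p = 0` the carrier is `ℤ`, since `a / 0 ^ k` is `a` or `0`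
    rcases eq_or_ne (p : ℚ) 0 with hp | hp
    · exact ⟨a * 0 ^ k + b * 0 ^ j, 0, by rcases k with _ | k <;> rcases j with _ | j <;> simp [hp]⟩
    · exact ⟨a * p ^ j + b * p ^ k, k + j, by push_cast; field_simp; ring⟩
  zero_mem' := ⟨0, 0, by simp⟩
  neg_mem' := by
    rintro _ ⟨a, k, rfl⟩
    exact ⟨-a, k, by push_cast; ring⟩

theorem mem_intInv {p : ℕ} {x : ℚ} : x ∈ intInv p ↔ ∃ a : ℤ, ∃ k : ℕ, x = a / (p : ℚ) ^ k :=
  Iff.rfl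

theorem inv_mem_intInv (p : ℕ) : (p : ℚ)⁻¹ ∈ intInv p := ⟨1, 1, by simp⟩

theorem inv_notMem_intInv {p q : ℕ} (hq : 1 < q) (hqp : q.Coprime p) :
    (q : ℚ)⁻¹ ∉ intInv p := by
  rintro ⟨a, k, h⟩
  have hq0 : (q : ℚ) ≠ 0 := by positivity
  have hpk : (p : ℚ) ^ k ≠ 0 := by
    rintro h0
    rw [h0, div_zero, inv_eq_zero] at h
    exact hq0 h
  field_simp at h
  have hdvd : q ∣ p ^ k := Int.natCast_dvd_natCast.1 ⟨a, by exact_mod_cast h⟩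
  exact hq.ne' ((hqp.pow_right k).eq_one_of_dvd hdvd)

theorem four_thirds_notMem_intInv_two : (4 / 3 : ℚ) ∉ intInv 2 := fun h =>
  inv_notMem_intInv (p := 2) (q := 3) (by norm_num) (by norm_num)
    (by convert sub_mem h (one_mem _) using 1; norm_num)

theorem half_notMem_intInv_three : (1 / 2 : ℚ) ∉ intInv 3 := by
  simpa using inv_notMem_intInv (p := 3) (q := 2) (by norm_num) (by norm_num)

def nonnegDyadic : AddSubmonoid ℚ := (intInv 2).toAddSubmonoid ⊓ AddSubmonoid.nonneg ℚ

/-- The submonoid generated by `Z[1/3]_{≥4/3}`, which is that set together with `0`. -/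
def triadicTail : AddSubmonoid ℚ where
  carrier := {y | y = 0 ∨ 4 / 3 ≤ y ∧ y ∈ intInv 3}
  add_mem' := by
    rintro x y (rfl | ⟨hx, hx3⟩) (rfl | ⟨hy, hy3⟩)
    · exact Or.inl (add_zero 0)
    · simpa using Or.inr ⟨hy, hy3⟩
    · simpa using Or.inr ⟨hx, hx3⟩
    · exact Or.inr ⟨by linarith, add_mem hx3 hy3⟩
  zero_mem' := Or.inl rfl

theorem triadicTail_le_nonneg : triadicTail ≤ AddSubmonoid.nonneg ℚ := by
  rintro y (rfl | ⟨hy, -⟩)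
  · exact AddSubmonoid.mem_nonneg.2 le_rfl
  · exact AddSubmonoid.mem_nonneg.2 ((by norm_num : (0 : ℚ) ≤ 4 / 3).trans hy)

theorem closure_S16_eq : AddSubmonoid.closure S16 = nonnegDyadic ⊔ triadicTail := by
  refine le_antisymm (AddSubmonoid.closure_le.2 ?_) (sup_le ?_ ?_)
  · rintro x (⟨hx, a, k, rfl⟩ | ⟨hx, a, k, rfl⟩)
    · exact AddSubmonoid.mem_sup_left ⟨⟨a, k, by simp⟩, hx⟩
    · exact AddSubmonoid.mem_sup_right (Or.inr ⟨hx, a, k, by simp⟩)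
  · rintro x ⟨⟨a, k, rfl⟩, hx⟩
    exact AddSubmonoid.subset_closure (Or.inl ⟨hx, a, k, by simp⟩)
  · rintro y (rfl | ⟨hy, a, k, rfl⟩)
    · exact zero_mem _
    · exact AddSubmonoid.subset_closure (Or.inr ⟨hy, a, k, by simp⟩)

theorem closure_S16_le_nonneg : AddSubmonoid.closure S16 ≤ AddSubmonoid.nonneg ℚ :=
  closure_S16_eq ▸ sup_le inf_le_right triadicTail_le_nonneg

theorem mem_M16 {z : ℚ} : z ∈ M16 ↔ ∃ x ∈ nonnegDyadic, ∃ y ∈ triadicTail, x + y = z := by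
  rw [M16, SetLike.mem_coe, closure_S16_eq, AddSubmonoid.mem_sup]

theorem mem_intInv_two_of_mem_M16_of_lt {z : ℚ} (hz : z ∈ M16) (h : z < 4 / 3) :
    z ∈ intInv 2 := by
  obtain ⟨x, ⟨hx2, hx0⟩, y, hy | ⟨hy, -⟩, rfl⟩ := mem_M16.1 hz
  · rwa [hy, add_zero]
  · exact absurd h (not_lt.2 (le_add_of_nonneg_of_le hx0 hy))

theorem sAtom_M16_four_thirds : SAtom M16 (4 / 3) := by
  refine (sAtom_iff closure_S16_le_nonneg).2
    ⟨AddSubmonoid.subset_closure (Or.inr ⟨le_rfl, 4, 1, by norm_num⟩), by norm_num,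
      fun b hb c hc h => ?_⟩
  by_contra! ⟨hb0, hc0⟩
  have hb_pos : 0 < b := (closure_S16_le_nonneg hb).lt_of_ne' hb0
  have hc_pos : 0 < c := (closure_S16_le_nonneg hc).lt_of_ne' hc0
  exact four_thirds_notMem_intInv_two (h ▸ add_mem
    (mem_intInv_two_of_mem_M16_of_lt hb (by linarith))
    (mem_intInv_two_of_mem_M16_of_lt hc (by linarith)))

theorem mem_intInv_three_of_sAtom_M16 {a : ℚ} (ha : SAtom M16 a) : a ∈ intInv 3 := by
  obtain ⟨haM, ha0, hsplit⟩ := (sAtom_iff closure_S16_le_nonneg).1 ha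
  obtain ⟨x, ⟨hx2, hx0⟩, y, hy, rfl⟩ := mem_M16.1 haM
  obtain rfl | hx_pos := (show (0 : ℚ) ≤ x from hx0).eq_or_lt
  · rcases hy with rfl | ⟨-, hy3⟩
    · exact absurd (add_zero 0) ha0
    · rwa [zero_add]
  · -- otherwise `x / 2 + (x / 2 + y)` splits the atom into two nonzero summands
    have hhalf : x / 2 ∈ nonnegDyadic :=
      AddSubmonoid.mem_inf.2 ⟨by simpa [div_eq_mul_inv] using (intInv 2).mul_mem hx2 (inv_mem_intInv 2),
        AddSubmonoid.mem_nonneg.2 (by positivity)⟩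
    have hy0 : 0 ≤ y := triadicTail_le_nonneg hy
    rcases hsplit (x / 2) (mem_M16.2 ⟨_, hhalf, 0, zero_mem _, add_zero _⟩)
      (x / 2 + y) (mem_M16.2 ⟨_, hhalf, y, hy, rfl⟩) (by ring) with h | h
    · linarith
    · linarith

/-- For the Puiseux monoid `M = ⟨Z[1/2]_{≥0} ∪ Z[1/3]_{≥4/3}⟩`: every atom of `M`
lies in `Z[1/3]` (its denominator is a power of `3`), `1/2 ∈ M` but `1/2` does not
belong to the difference group of the submonoid generated by the atoms of `M`, so
`M` is not almost atomic; moreover `M` is quasi-atomic. -/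
theorem quasi_atomic_not_almost_atomic :
    (∀ x : ℚ, SAtom M16 x → ∃ a : ℤ, ∃ k : ℕ, x = (a : ℚ) / 3 ^ k) ∧
    (1 : ℚ) / 2 ∈ M16 ∧
    (¬ ∃ u v : ℚ,
      (∃ l : Multiset ℚ, (∀ a ∈ l, SAtom M16 a) ∧ l.sum = u) ∧
      (∃ l : Multiset ℚ, (∀ a ∈ l, SAtom M16 a) ∧ l.sum = v) ∧
      (1 : ℚ) / 2 = u - v) ∧
    (¬ ∀ c ∈ M16, c ≠ 0 →
      ∃ b ∈ M16, SAtomicElem M16 b ∧ SAtomicElem M16 (b + c)) ∧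
    (∀ c ∈ M16, c ≠ 0 → ∃ b ∈ M16, SAtomicElem M16 (b + c)) := by
  have hM := closure_S16_le_nonneg
  have half_mem : (1 : ℚ) / 2 ∈ M16 :=
    AddSubmonoid.subset_closure (Or.inl ⟨by norm_num, 1, 1, by norm_num⟩)
  have sum_mem : ∀ l : Multiset ℚ, (∀ a ∈ l, SAtom M16 a) → l.sum ∈ intInv 3 :=
    fun l hl => multiset_sum_mem l fun a ha => mem_intInv_three_of_sAtom_M16 (hl a ha)
  have half_notMem_diff : ¬ ∃ u v : ℚ,
      (∃ l : Multiset ℚ, (∀ a ∈ l, SAtom M16 a) ∧ l.sum = u) ∧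
      (∃ l : Multiset ℚ, (∀ a ∈ l, SAtom M16 a) ∧ l.sum = v) ∧
      (1 : ℚ) / 2 = u - v := by
    rintro ⟨_, _, ⟨l, hl, rfl⟩, ⟨l', hl', rfl⟩, h⟩
    exact half_notMem_intInv_three (h ▸ sub_mem (sum_mem l hl) (sum_mem l' hl'))
  refine ⟨fun x hx => by simpa using mem_intInv.1 (mem_intInv_three_of_sAtom_M16 hx), half_mem,
    half_notMem_diff, fun h => ?_,
    fun c hc hc0 => exists_add_sAtomicElem_of_sAtom hM sAtom_M16_four_thirds hc hc0⟩
  obtain ⟨b, hb, hb_atomic, hbc_atomic⟩ := h _ half_mem (by norm_num)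
  exact half_notMem_diff ⟨b + 1 / 2, b,
    (sAtomicElem_iff hM (AddSubmonoid.add_mem _ hb half_mem)).1 hbc_atomic,
    (sAtomicElem_iff hM hb).1 hb_atomic, by ring⟩
end

section
/- Let M_0 = ⟨1/p : p prime⟩ ⊆ Q_{≥0}, let G be the difference group of M_0, and let M = M_0 ∪ {g ∈ G : g ≥ 1}. Then M is an additive submonoid of Q_{≥0} whose set of atoms is {1/p : p prime}, M is almost atomic, but M is not nearly atomic. -/
/-- The Puiseux monoid generated by the reciprocals of the primes. -/
def M017 : Set ℚ :=
  (AddSubmonoid.closure {x : ℚ | ∃ p : ℕ, p.Prime ∧ x = 1 / p} : Set ℚ)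

/-- The difference group of `M₀`. -/
def G17 : Set ℚ := {x : ℚ | ∃ u ∈ M017, ∃ v ∈ M017, x = u - v}

/-- The monoid `M = M₀ ∪ G_{≥1}`. -/
def M17 : Set ℚ := M017 ∪ {x ∈ G17 | 1 ≤ x}

theorem sUnit_iff_eq_zero_s17 {A : Type*} [AddCommMonoid A] [PartialOrder A] [IsOrderedAddMonoid A]
    {S : Set A} (hS : ∀ y ∈ S, 0 ≤ y) (h0 : (0 : A) ∈ S) {x : A} (hx : 0 ≤ x) :
    SUnit S x ↔ x = 0 := by
  constructor
  · rintro ⟨y, hy, hxy⟩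
    exact ((add_eq_zero_iff_of_nonneg hx (hS y hy)).1 hxy).1
  · rintro rfl
    exact ⟨0, h0, add_zero 0⟩

theorem Multiset.sum_count_nsmul_le_sum {A : Type*} [AddCommMonoid A] [PartialOrder A]
    [IsOrderedAddMonoid A] [DecidableEq A] {l : Multiset A} (hl : ∀ x ∈ l, 0 ≤ x)
    (S : Finset A) : ∑ x ∈ S, l.count x • x ≤ l.sum := by
  calc ∑ x ∈ S, l.count x • x = ∑ x ∈ S with x ∈ l.toFinset, l.count x • x :=
        (Finset.sum_filter_of_ne fun x _ hx => Multiset.mem_toFinset.2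
          (Multiset.count_ne_zero.1 fun h => hx (by rw [h, zero_smul]))).symm
    _ ≤ ∑ x ∈ l.toFinset, l.count x • x :=
        Finset.sum_le_sum_of_subset_of_nonneg (fun x hx => (Finset.mem_filter.1 hx).2)
          fun x hx _ => nsmul_nonneg (hl x (Multiset.mem_toFinset.1 hx)) _
    _ = l.sum := (Finset.sum_multiset_count l).symm

theorem Nat.exists_finset_primes_gt (d n : ℕ) :
    ∃ T : Finset ℕ, T.card = n ∧ ∀ p ∈ T, p.Prime ∧ d < p := by
  obtain ⟨T, hT, hcard⟩ :=
    (Nat.infinite_setOfPred_prime.sdiff (Set.finite_le_nat d)).exists_subset_card_eq n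
  exact ⟨T, hcard, fun p hp => ⟨(hT hp).1, not_le.1 (hT hp).2⟩⟩

section padicIntegral

variable (p : ℕ) [Fact p.Prime]

def padicIntegral : AddSubgroup ℚ where
  carrier := {x | padicNorm p x ≤ 1}
  zero_mem' := by simp
  add_mem' ha hb := padicNorm.nonarchimedean.trans (max_le ha hb)
  neg_mem' := by simp [padicNorm.neg]

variable {p}

theorem intCast_mem_padicIntegral (z : ℤ) : (z : ℚ) ∈ padicIntegral p :=
  padicNorm.of_int z

theorem one_div_prime_mem_padicIntegral {q : ℕ} (hq : q.Prime) (hqp : q ≠ p) :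
    1 / (q : ℚ) ∈ padicIntegral p := by
  have := Fact.mk hq
  show padicNorm p (1 / q) ≤ 1
  rw [padicNorm.div, padicNorm.one, padicNorm.padicNorm_of_prime_of_ne hqp.symm, div_one]

theorem mem_padicIntegral_of_den_lt {x : ℚ} (hx : x.den < p) : x ∈ padicIntegral p := by
  have hden : padicNorm p x.den = 1 :=
    (padicNorm.nat_eq_one_iff _).2 fun h => absurd (Nat.le_of_dvd x.den_pos h) (by omega)
  show padicNorm p x ≤ 1
  rw [← Rat.num_div_den x, padicNorm.div, hden, div_one]
  exact padicNorm.of_int _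

theorem dvd_of_div_mem_padicIntegral {z : ℤ} (h : (z / p : ℚ) ∈ padicIntegral p) :
    (p : ℤ) ∣ z := by
  have hp : (p : ℚ) ≠ 0 := by exact_mod_cast (Fact.out : p.Prime).ne_zero
  rw [← padicNorm.int_lt_one_iff]
  calc padicNorm p z = padicNorm p (z / p) * padicNorm p p := by
        rw [← padicNorm.mul, div_mul_cancel₀ _ hp]
    _ ≤ 1 * padicNorm p p := mul_le_mul_of_nonneg_right h (padicNorm.nonneg _)
    _ < 1 := by rw [one_mul]; exact padicNorm.padicNorm_p_lt_one_of_prime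

end padicIntegral

def primeRecips : Set ℚ := {x | ∃ p : ℕ, p.Prime ∧ x = 1 / p}

theorem pos_of_mem_primeRecips {x : ℚ} (hx : x ∈ primeRecips) : 0 < x := by
  obtain ⟨p, hp, rfl⟩ := hx
  have : (0 : ℚ) < p := by exact_mod_cast hp.pos
  positivity

theorem one_div_prime_mem_primeRecips {p : ℕ} (hp : p.Prime) : 1 / (p : ℚ) ∈ primeRecips :=
  ⟨p, hp, rfl⟩

/-- In a sum of prime reciprocals every `1 / q` with `q ≠ p` is integral at `p`, so modulo
`p`-integral rationals the sum only sees the number of copies of `1 / p`. -/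
theorem dvd_count_sub_of_sum_eq {p : ℕ} [Fact p.Prime] {l : Multiset ℚ}
    (hl : ∀ x ∈ l, x ∈ primeRecips) (k : ℤ) {r : ℚ} (hr : r ∈ padicIntegral p)
    (h : l.sum = k / p + r) : (p : ℤ) ∣ l.count (1 / (p : ℚ)) - k := by
  classical
  set rest := (l.filter (· ≠ 1 / (p : ℚ))).sum
  have hrest : rest ∈ padicIntegral p := by
    refine AddSubgroup.multiset_sum_mem _ _ fun x hx => ?_
    obtain ⟨hxl, hxp⟩ := Multiset.mem_filter.1 hx
    obtain ⟨q, hq, rfl⟩ := hl x hxl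
    exact one_div_prime_mem_padicIntegral hq fun hqp => hxp (by rw [hqp])
  have hsplit : l.sum = l.count (1 / (p : ℚ)) / p + rest := by
    rw [← Multiset.sum_filter_add_sum_filter_not (· = 1 / (p : ℚ)), Multiset.filter_eq',
      Multiset.sum_replicate, nsmul_eq_mul, mul_one_div]
  apply dvd_of_div_mem_padicIntegral
  have : ((l.count (1 / (p : ℚ)) - k : ℤ) : ℚ) / p = r - rest := by
    push_cast
    rw [sub_div]
    linarith
  rw [this]
  exact sub_mem hr hrest

theorem one_div_mem_of_sum_eq {p : ℕ} (hp : p.Prime) {l : Multiset ℚ}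
    (hl : ∀ x ∈ l, x ∈ primeRecips) (h : l.sum = 1 / p) : 1 / (p : ℚ) ∈ l := by
  have := Fact.mk hp
  have hdvd := dvd_count_sub_of_sum_eq hl 1 (zero_mem _) (by rw [h]; push_cast; ring)
  rw [← Multiset.count_ne_zero]
  intro h0
  rw [h0, Int.natCast_zero, zero_sub, Int.dvd_neg] at hdvd
  exact hp.one_lt.ne' (by exact_mod_cast Int.eq_one_of_dvd_one (by positivity) hdvd)

theorem mem_M017_iff {x : ℚ} :
    x ∈ M017 ↔ ∃ l : Multiset ℚ, (∀ y ∈ l, y ∈ primeRecips) ∧ l.sum = x := by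
  constructor
  · exact AddSubmonoid.exists_multiset_of_mem_closure
  · rintro ⟨l, hl, rfl⟩
    exact AddSubmonoid.multiset_sum_mem _ _ fun y hy => AddSubmonoid.subset_closure (hl y hy)

theorem one_div_prime_mem_M017 {p : ℕ} (hp : p.Prime) : 1 / (p : ℚ) ∈ M017 :=
  AddSubmonoid.subset_closure (one_div_prime_mem_primeRecips hp)

theorem one_sub_one_div_eq_nsmul {p : ℕ} (hp : p ≠ 0) :
    1 - 1 / (p : ℚ) = (p - 1) • (1 / (p : ℚ)) := by
  have hp0 : (p : ℚ) ≠ 0 := by exact_mod_cast hp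
  rw [nsmul_eq_mul, Nat.cast_sub (Nat.one_le_iff_ne_zero.2 hp), Nat.cast_one]
  field_simp

theorem one_sub_one_div_prime_mem_M017 {p : ℕ} (hp : p.Prime) : 1 - 1 / (p : ℚ) ∈ M017 := by
  rw [one_sub_one_div_eq_nsmul hp.ne_zero]
  exact AddSubmonoid.nsmul_mem _ (one_div_prime_mem_M017 hp) _

theorem natCast_mem_M017 (n : ℕ) : (n : ℚ) ∈ M017 := by
  have h : (n : ℚ) = (2 * n) • (1 / ((2 : ℕ) : ℚ)) := by
    rw [nsmul_eq_mul]
    push_cast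
    ring
  rw [h]
  exact AddSubmonoid.nsmul_mem _ (one_div_prime_mem_M017 Nat.prime_two) _

theorem nonneg_of_mem_M017 {x : ℚ} (hx : x ∈ M017) : 0 ≤ x := by
  obtain ⟨l, hl, rfl⟩ := mem_M017_iff.1 hx
  exact Multiset.sum_nonneg fun y hy => (pos_of_mem_primeRecips (hl y hy)).le

theorem mem_M17_of_mem_M017 {x : ℚ} (hx : x ∈ M017) : x ∈ M17 := Or.inl hx

theorem zero_mem_M17 : (0 : ℚ) ∈ M17 := mem_M17_of_mem_M017 (AddSubmonoid.zero_mem _)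

theorem nonneg_of_mem_M17 {x : ℚ} (hx : x ∈ M17) : 0 ≤ x := by
  rcases hx with hx | ⟨-, hx⟩
  · exact nonneg_of_mem_M017 hx
  · linarith

theorem mem_M017_of_mem_M17_of_lt_one {x : ℚ} (hx : x ∈ M17) (hx1 : x < 1) : x ∈ M017 := by
  rcases hx with hx | ⟨-, hx⟩
  · exact hx
  · linarith

theorem mem_G17_of_mem_M17 {x : ℚ} (hx : x ∈ M17) : x ∈ G17 := by
  rcases hx with hx | ⟨hx, -⟩
  · exact ⟨x, hx, 0, AddSubmonoid.zero_mem _, (sub_zero x).symm⟩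
  · exact hx

theorem add_mem_G17 {x y : ℚ} (hx : x ∈ G17) (hy : y ∈ G17) : x + y ∈ G17 := by
  obtain ⟨u, hu, v, hv, rfl⟩ := hx
  obtain ⟨u', hu', v', hv', rfl⟩ := hy
  exact ⟨u + u', AddSubmonoid.add_mem _ hu hu', v + v', AddSubmonoid.add_mem _ hv hv', by ring⟩

theorem add_mem_M17 {x y : ℚ} (hx : x ∈ M17) (hy : y ∈ M17) : x + y ∈ M17 := by
  rcases lt_or_ge (x + y) 1 with hxy | hxy
  · have hx0 := nonneg_of_mem_M17 hx
    have hy0 := nonneg_of_mem_M17 hy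
    exact mem_M17_of_mem_M017 (AddSubmonoid.add_mem _
      (mem_M017_of_mem_M17_of_lt_one hx (by linarith))
      (mem_M017_of_mem_M17_of_lt_one hy (by linarith)))
  · exact Or.inr ⟨add_mem_G17 (mem_G17_of_mem_M17 hx) (mem_G17_of_mem_M17 hy), hxy⟩

theorem sUnit_M17_iff {x : ℚ} (hx : 0 ≤ x) : SUnit M17 x ↔ x = 0 :=
  sUnit_iff_eq_zero_s17 (fun _ => nonneg_of_mem_M17) zero_mem_M17 hx

theorem sAtom_one_div_prime {p : ℕ} (hp : p.Prime) : SAtom M17 (1 / p) := by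
  have hpos := pos_of_mem_primeRecips (one_div_prime_mem_primeRecips hp)
  refine ⟨mem_M17_of_mem_M017 (one_div_prime_mem_M017 hp),
    fun hu => hpos.ne' ((sUnit_M17_iff hpos.le).1 hu), fun b hb c hc hbc => ?_⟩
  have hb0 := nonneg_of_mem_M17 hb
  have hc0 := nonneg_of_mem_M17 hc
  have hp1 : 1 / (p : ℚ) < 1 := by
    rw [div_lt_one (by exact_mod_cast hp.pos)]
    exact_mod_cast hp.one_lt
  obtain ⟨l, hl, rfl⟩ := mem_M017_iff.1 (mem_M017_of_mem_M17_of_lt_one hb (by linarith))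
  obtain ⟨l', hl', rfl⟩ := mem_M017_iff.1 (mem_M017_of_mem_M17_of_lt_one hc (by linarith))
  have hmem : 1 / (p : ℚ) ∈ l + l' := one_div_mem_of_sum_eq hp
    (fun y hy => (Multiset.mem_add.1 hy).elim (hl y) (hl' y)) (by rw [Multiset.sum_add, hbc])
  rw [sUnit_M17_iff hb0, sUnit_M17_iff hc0]
  rcases Multiset.mem_add.1 hmem with h | h
  · have := Multiset.single_le_sum (fun y hy => (pos_of_mem_primeRecips (hl y hy)).le) _ h
    right; linarith
  · have := Multiset.single_le_sum (fun y hy => (pos_of_mem_primeRecips (hl' y hy)).le) _ h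
    left; linarith

theorem exists_prime_sub_one_div_mem_M17 {x : ℚ} (hx : x ∈ M17) (hx0 : x ≠ 0) :
    ∃ p : ℕ, p.Prime ∧ x - 1 / p ∈ M17 := by
  have hM017 : x ∈ M017 → ∃ p : ℕ, p.Prime ∧ x - 1 / p ∈ M17 := by
    intro hx
    obtain ⟨l, hl, rfl⟩ := mem_M017_iff.1 hx
    obtain ⟨y, hy⟩ := Multiset.exists_mem_of_ne_zero fun (h : l = 0) => hx0 (by simp [h])
    obtain ⟨p, hp, rfl⟩ := hl y hy
    refine ⟨p, hp, mem_M17_of_mem_M017 (mem_M017_iff.2 ⟨l.erase (1 / p), ?_, ?_⟩)⟩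
    · exact fun z hz => hl z (Multiset.mem_of_mem_erase hz)
    · rw [← Multiset.sum_erase hy, add_sub_cancel_left]
  rcases hx with hx | ⟨⟨u, hu, v, hv, rfl⟩, hx1⟩
  · exact hM017 hx
  rcases hx1.eq_or_lt with h1 | h1
  · exact hM017 (by rw [← h1]; exact_mod_cast natCast_mem_M017 1)
  obtain ⟨n, hn⟩ := exists_nat_one_div_lt (sub_pos.2 h1)
  obtain ⟨p, hnp, hp⟩ := Nat.exists_infinite_primes (n + 1)
  refine ⟨p, hp, Or.inr ⟨⟨u, hu, v + 1 / p,
    AddSubmonoid.add_mem _ hv (one_div_prime_mem_M017 hp), by ring⟩, ?_⟩⟩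
  have : 1 / (p : ℚ) ≤ 1 / (n + 1) :=
    one_div_le_one_div_of_le (by positivity) (by exact_mod_cast hnp)
  linarith

theorem mem_primeRecips_of_sAtom {a : ℚ} (ha : SAtom M17 a) : a ∈ primeRecips := by
  obtain ⟨haM, hnu, hdec⟩ := ha
  have ha0 : a ≠ 0 := fun h => hnu ((sUnit_M17_iff (nonneg_of_mem_M17 haM)).2 h)
  obtain ⟨p, hp, hpM⟩ := exists_prime_sub_one_div_mem_M17 haM ha0
  rcases hdec _ (mem_M17_of_mem_M017 (one_div_prime_mem_M017 hp)) _ hpM (by ring) with hu | hu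
  · exact absurd hu (sAtom_one_div_prime hp).2.1
  · rw [sUnit_M17_iff (nonneg_of_mem_M17 hpM), sub_eq_zero] at hu
    exact ⟨p, hp, hu⟩

theorem setOf_sAtom_M17 : {a | SAtom M17 a} = primeRecips :=
  Set.ext fun _ => ⟨mem_primeRecips_of_sAtom, fun ⟨_, hp, hx⟩ => hx ▸ sAtom_one_div_prime hp⟩

theorem sAtomicElem_of_mem_M017 {x : ℚ} (hx : x ∈ M017) : SAtomicElem M17 x := by
  obtain ⟨l, hl, hs⟩ := mem_M017_iff.1 hx
  refine Or.inr ⟨l, fun a ha => ?_, hs⟩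
  obtain ⟨p, hp, rfl⟩ := hl a ha
  exact sAtom_one_div_prime hp

theorem exists_sAtomicElem_add {c : ℚ} (hc : c ∈ M17) :
    ∃ b ∈ M17, SAtomicElem M17 b ∧ SAtomicElem M17 (b + c) := by
  rcases hc with hc | ⟨⟨u, hu, v, hv, rfl⟩, -⟩
  · exact ⟨0, zero_mem_M17, sAtomicElem_of_mem_M017 (AddSubmonoid.zero_mem _),
      by rw [zero_add]; exact sAtomicElem_of_mem_M017 hc⟩
  · exact ⟨v, mem_M17_of_mem_M017 hv, sAtomicElem_of_mem_M017 hv,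
      by rw [add_sub_cancel]; exact sAtomicElem_of_mem_M017 hu⟩

theorem pred_le_count_of_sum_eq {p : ℕ} [Fact p.Prime] {T : Finset ℕ} (hT : ∀ q ∈ T, q.Prime)
    (hpT : p ∈ T) {l : Multiset ℚ} (hl : ∀ x ∈ l, x ∈ primeRecips) {y : ℚ}
    (hy : y ∈ padicIntegral p) (h : l.sum = y + ∑ q ∈ T, (1 - 1 / (q : ℚ))) :
    p - 1 ≤ l.count (1 / (p : ℚ)) := by
  have hrest : ∑ q ∈ T.erase p, (1 - 1 / (q : ℚ)) ∈ padicIntegral p := by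
    refine AddSubgroup.sum_mem _ fun q hq => sub_mem ?_ ?_
    · exact_mod_cast intCast_mem_padicIntegral 1
    · exact one_div_prime_mem_padicIntegral (hT q (Finset.mem_of_mem_erase hq))
        (Finset.ne_of_mem_erase hq)
  have hdvd := dvd_count_sub_of_sum_eq hl (-1)
    (add_mem (add_mem hy (by exact_mod_cast intCast_mem_padicIntegral 1)) hrest)
    (by rw [h, ← Finset.add_sum_erase T _ hpT]; push_cast; ring)
  rw [sub_neg_eq_add] at hdvd
  have := Nat.le_of_dvd (Nat.succ_pos _) (by exact_mod_cast hdvd)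
  omega

theorem sum_one_sub_one_div_le_sum {T : Finset ℕ} (hT : ∀ p ∈ T, p.Prime) {l : Multiset ℚ}
    (hl : ∀ x ∈ l, x ∈ primeRecips) (hcount : ∀ p ∈ T, p - 1 ≤ l.count (1 / (p : ℚ))) :
    ∑ p ∈ T, (1 - 1 / (p : ℚ)) ≤ l.sum := by
  have hinj : Set.InjOn (fun p : ℕ => 1 / (p : ℚ)) T := fun p _ q _ h => by simpa using h
  calc ∑ p ∈ T, (1 - 1 / (p : ℚ)) = ∑ p ∈ T, (p - 1) • (1 / (p : ℚ)) :=
        Finset.sum_congr rfl fun p hp => one_sub_one_div_eq_nsmul (hT p hp).ne_zero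
    _ ≤ ∑ p ∈ T, l.count (1 / (p : ℚ)) • (1 / (p : ℚ)) :=
        Finset.sum_le_sum fun p hp => nsmul_le_nsmul_left
          (pos_of_mem_primeRecips (one_div_prime_mem_primeRecips (hT p hp))).le (hcount p hp)
    _ = ∑ x ∈ T.image fun p : ℕ => 1 / (p : ℚ), l.count x • x :=
        (Finset.sum_image (f := fun x => l.count x • x) hinj).symm
    _ ≤ l.sum := Multiset.sum_count_nsmul_le_sum
        (fun x hx => (pos_of_mem_primeRecips (hl x hx)).le) _

theorem not_exists_forall_sAtomicElem_add :
    ¬ ∃ b ∈ M17, ∀ c ∈ M17, c ≠ 0 → SAtomicElem M17 (b + c) := by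
  rintro ⟨b, hb, hbc⟩
  set m := ⌊b⌋₊ + 1
  have hbm : b < m := by simpa [m] using Nat.lt_floor_add_one b
  obtain ⟨T, hcard, hT⟩ := Nat.exists_finset_primes_gt b.den (2 * m + 2)
  set s := ∑ p ∈ T, (1 - 1 / (p : ℚ)) with hs_def
  have hs : (m : ℚ) + 1 ≤ s := by
    have := Finset.card_nsmul_le_sum T (fun p : ℕ => 1 - 1 / (p : ℚ)) (1 / 2) fun p hp => by
      have : (2 : ℚ) ≤ p := by exact_mod_cast (hT p hp).1.two_le
      have : 1 / (p : ℚ) ≤ 1 / 2 := one_div_le_one_div_of_le (by norm_num) this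
      linarith
    rw [hcard, nsmul_eq_mul] at this
    push_cast at this
    linarith
  have hsM : s ∈ M017 :=
    AddSubmonoid.sum_mem _ fun p hp => one_sub_one_div_prime_mem_M017 (hT p hp).1
  have hcM : s - m ∈ M17 := Or.inr ⟨⟨s, hsM, m, natCast_mem_M017 m, rfl⟩, by linarith⟩
  have hb0 := nonneg_of_mem_M17 hb
  obtain ⟨l, hl, hsum⟩ : ∃ l : Multiset ℚ, (∀ a ∈ l, a ∈ primeRecips) ∧ l.sum = b + (s - m) := by
    rcases hbc _ hcM (by linarith) with hu | ⟨l, hl, hsum⟩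
    · rw [sUnit_M17_iff (by linarith)] at hu
      linarith
    · exact ⟨l, fun a ha => mem_primeRecips_of_sAtom (hl a ha), hsum⟩
  have hcount : ∀ p ∈ T, p - 1 ≤ l.count (1 / (p : ℚ)) := fun p hp => by
    have := Fact.mk (hT p hp).1
    refine pred_le_count_of_sum_eq (y := b - m) (fun q hq => (hT q hq).1) hp hl
      (sub_mem (mem_padicIntegral_of_den_lt (hT p hp).2) ?_) (by rw [hsum, hs_def]; ring)
    exact_mod_cast intCast_mem_padicIntegral m
  have := sum_one_sub_one_div_le_sum (fun p hp => (hT p hp).1) hl hcount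
  linarith

/-- The Puiseux monoid `M = M₀ ∪ G_{≥1}`, where `M₀ = ⟨1/p : p prime⟩` and `G` is
its difference group, is an additive submonoid of `ℚ_{≥0}` whose set of atoms is
`{1/p : p prime}`; it is almost atomic but not nearly atomic. -/
theorem almost_atomic_not_nearly_atomic :
    ((0 : ℚ) ∈ M17 ∧ (∀ x ∈ M17, ∀ y ∈ M17, x + y ∈ M17) ∧ ∀ x ∈ M17, (0 : ℚ) ≤ x) ∧
    {a : ℚ | SAtom M17 a} = {x : ℚ | ∃ p : ℕ, p.Prime ∧ x = 1 / p} ∧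
    (∀ c ∈ M17, c ≠ 0 →
      ∃ b ∈ M17, SAtomicElem M17 b ∧ SAtomicElem M17 (b + c)) ∧
    ¬ ∃ b ∈ M17, ∀ c ∈ M17, c ≠ 0 → SAtomicElem M17 (b + c) :=
  ⟨⟨zero_mem_M17, fun _ hx _ hy => add_mem_M17 hx hy, fun _ => nonneg_of_mem_M17⟩,
    setOf_sAtom_M17, fun _ hc _ => exists_sAtomicElem_add hc, not_exists_forall_sAtomicElem_add⟩
end

section
/- Let α be a positive irrational real number and let φ : Q_{≥0} → P be an injective function into the primes. Let M be the additive submonoid of R_{≥0} generated by {q : q ∈ Q_{≥0}} ∪ {(α + q)/φ(q) : q ∈ Q_{≥0}}. Then (α + q)/φ(q) is an atom of M for every q ∈ Q_{≥0}, M is nearly atomic (with witness α = φ(0)·(α/φ(0)) ∈ M: for every r ∈ M the element α + r is a finite sum of atoms), but M is not atomic, since no nonzero rational element of M is a sum of atoms. -/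
/-- The submonoid of `ℝ_{≥0}` generated by the nonnegative rationals together with
the elements `(α + q)/φ(q)` for nonnegative rational `q`. -/
def M18 (α : ℝ) (φ : ℚ → ℕ) : Set ℝ :=
  (AddSubmonoid.closure
    ({x : ℝ | ∃ q : ℚ, 0 ≤ q ∧ x = (q : ℝ)} ∪
     {x : ℝ | ∃ q : ℚ, 0 ≤ q ∧ x = (α + (q : ℝ)) / (φ q : ℝ)}) : Set ℝ)

theorem nonpos_of_sUnit {A : Type*} [AddCommMonoid A] [PartialOrder A] [IsOrderedAddMonoid A]
    {S : Set A} (hS : ∀ x ∈ S, 0 ≤ x) {x : A} (hx : SUnit S x) : x ≤ 0 := by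
  obtain ⟨y, hy, hxy⟩ := hx
  exact hxy ▸ le_add_of_nonneg_right (hS y hy)

theorem sUnit_zero {A : Type*} [AddCommMonoid A] {S : Set A} (h0 : (0 : A) ∈ S) : SUnit S 0 :=
  ⟨0, h0, add_zero 0⟩

theorem Irrational.eq_of_ratCast_mul_add_eq {α : ℝ} (h : Irrational α) {c c' d d' : ℚ}
    (e : c * α + d = c' * α + d') : c = c' ∧ d = d' := by
  have hc : c = c' := by
    by_contra hne
    refine (h.ratCast_mul (sub_ne_zero.mpr hne)).ne_rat (d' - d) ?_
    push_cast
    linarith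
  subst hc
  exact ⟨rfl, by exact_mod_cast add_left_cancel e⟩

theorem Multiset.sum_pos_of_ne_zero {M : Type*} [AddCommMonoid M] [PartialOrder M]
    [IsOrderedCancelAddMonoid M] {s : Multiset M} (hs : s ≠ 0) (h : ∀ x ∈ s, 0 < x) :
    0 < s.sum :=
  Multiset.sum_induction_nonempty (0 < ·) (fun _ _ => add_pos) (by simpa using hs) h

theorem Multiset.exists_nat_eq_sum_inv_mul_prod {P : Multiset ℕ} (hP : (0 : ℕ) ∉ P) :
    ∃ m : ℕ, (P.map fun p : ℕ => (p : ℚ)⁻¹).sum * P.prod = m := by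
  induction P using Multiset.induction with
  | empty => exact ⟨0, by simp⟩
  | cons a P ih =>
    obtain ⟨m, hm⟩ := ih (fun h => hP (Multiset.mem_cons_of_mem h))
    have ha : (a : ℚ) ≠ 0 := by
      exact_mod_cast fun h : a = 0 => hP (h ▸ Multiset.mem_cons_self a P)
    refine ⟨P.prod + a * m, ?_⟩
    simp only [Multiset.map_cons, Multiset.sum_cons, Multiset.prod_cons]
    rw [Nat.cast_add, Nat.cast_mul, Nat.cast_mul, ← hm]
    field_simp

theorem Multiset.eq_singleton_of_sum_inv_eq_inv_prime {P : Multiset ℕ} (hP : ∀ x ∈ P, x.Prime)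
    {p : ℕ} (hp : p.Prime) (h : (P.map fun x : ℕ => (x : ℚ)⁻¹).sum = (p : ℚ)⁻¹) : P = {p} := by
  obtain ⟨m, hm⟩ := exists_nat_eq_sum_inv_mul_prod fun h0 => Nat.not_prime_zero (hP 0 h0)
  have hdvd : p ∣ P.prod := by
    refine ⟨m, ?_⟩
    rw [h] at hm
    have hp0 : (p : ℚ) ≠ 0 := by exact_mod_cast hp.ne_zero
    exact_mod_cast (inv_mul_eq_iff_eq_mul₀ hp0).mp hm
  obtain ⟨x, hx, hpx⟩ := hp.prime.exists_mem_multiset_dvd hdvd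
  rw [(Nat.prime_dvd_prime_iff_eq hp (hP x hx)).mp hpx] at h ⊢
  obtain ⟨t, rfl⟩ := Multiset.exists_cons_of_mem hx
  have ht : (t.map fun x : ℕ => (x : ℚ)⁻¹).sum = 0 := by simpa using h
  by_contra hne
  refine (Multiset.sum_pos_of_ne_zero (s := t.map fun x : ℕ => (x : ℚ)⁻¹) ?_ ?_).ne' ht
  · rintro h0
    exact hne (by simp_all)
  · simp only [Multiset.mem_map]
    rintro _ ⟨y, hy, rfl⟩
    exact inv_pos.mpr (by exact_mod_cast (hP y (Multiset.mem_cons_of_mem hy)).pos)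

namespace M18

variable {α : ℝ} {φ : ℚ → ℕ}

noncomputable def gen (α : ℝ) (φ : ℚ → ℕ) (q : ℚ) : ℝ := (α + q) / φ q

def alphaCoeff (φ : ℚ → ℕ) (s : Multiset ℚ) : ℚ := (s.map fun r => (φ r : ℚ)⁻¹).sum

def ratCoeff (φ : ℚ → ℕ) (s : Multiset ℚ) : ℚ := (s.map fun r => r / φ r).sum

theorem ratCast_mem {q : ℚ} (hq : 0 ≤ q) : (q : ℝ) ∈ M18 α φ :=
  AddSubmonoid.subset_closure (Or.inl ⟨q, hq, rfl⟩)

theorem gen_mem {q : ℚ} (hq : 0 ≤ q) : gen α φ q ∈ M18 α φ :=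
  AddSubmonoid.subset_closure (Or.inr ⟨q, hq, rfl⟩)

theorem gen_pos (hα : 0 < α) {q : ℚ} (hq : 0 ≤ q) (hp : 0 < φ q) : 0 < gen α φ q := by
  have hq' : (0 : ℝ) ≤ q := by exact_mod_cast hq
  exact div_pos (by linarith) (by exact_mod_cast hp)

theorem nonneg_of_mem (hα : 0 < α) {x : ℝ} (hx : x ∈ M18 α φ) : 0 ≤ x := by
  refine AddSubmonoid.closure_induction (fun x hx => ?_) le_rfl
    (fun _ _ _ _ hx hy => add_nonneg hx hy) hx
  rcases hx with ⟨q, hq, rfl⟩ | ⟨q, hq, rfl⟩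
  · exact_mod_cast hq
  · have hq' : (0 : ℝ) ≤ q := by exact_mod_cast hq
    exact div_nonneg (by linarith) (Nat.cast_nonneg _)

theorem nsmul_gen {q : ℚ} (hp : φ q ≠ 0) : φ q • gen α φ q = α + q := by
  rw [nsmul_eq_mul, gen, mul_div_cancel₀ _ (by exact_mod_cast hp)]

theorem exists_eq_ratCast_add_sum_gen {x : ℝ} (hx : x ∈ M18 α φ) :
    ∃ (q : ℚ) (s : Multiset ℚ), 0 ≤ q ∧ (∀ r ∈ s, 0 ≤ r) ∧
      x = q + (s.map (gen α φ)).sum := by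
  refine AddSubmonoid.closure_induction (fun x hx => ?_) ⟨0, 0, le_rfl, by simp, by simp⟩
    ?_ hx
  · rcases hx with ⟨q, hq, rfl⟩ | ⟨q, hq, rfl⟩
    · exact ⟨q, 0, hq, by simp, by simp⟩
    · exact ⟨0, {q}, le_rfl, by simpa using hq, by simp [gen]⟩
  · rintro _ _ _ _ ⟨q, s, hq, hs, rfl⟩ ⟨q', s', hq', hs', rfl⟩
    refine ⟨q + q', s + s', add_nonneg hq hq', fun r hr => ?_, ?_⟩
    · exact (Multiset.mem_add.mp hr).elim (hs r) (hs' r)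
    · push_cast
      rw [Multiset.map_add, Multiset.sum_add]
      ring

theorem sum_gen (s : Multiset ℚ) :
    (s.map (gen α φ)).sum = (alphaCoeff φ s : ℝ) * α + ratCoeff φ s := by
  have h : gen α φ = fun r => ((φ r : ℚ)⁻¹ : ℚ) * α + ((r / φ r : ℚ) : ℝ) := by
    ext r
    simp only [gen]
    push_cast
    ring
  simp only [h, Multiset.sum_map_add, Multiset.sum_map_mul_right, alphaCoeff, ratCoeff,
    Rat.cast_multiset_sum, Multiset.map_map, Function.comp_def]

theorem alphaCoeff_pos (hφ : ∀ q : ℚ, 0 ≤ q → (φ q).Prime) {s : Multiset ℚ}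
    (hs : ∀ r ∈ s, 0 ≤ r) (hs0 : s ≠ 0) : 0 < alphaCoeff φ s := by
  refine Multiset.sum_pos_of_ne_zero (by simpa using hs0) ?_
  simp only [Multiset.mem_map]
  rintro _ ⟨r, hr, rfl⟩
  exact inv_pos.mpr (by exact_mod_cast (hφ r (hs r hr)).pos)

theorem eq_singleton_of_alphaCoeff_eq (hφ : ∀ q : ℚ, 0 ≤ q → (φ q).Prime)
    (hinj : ∀ q r : ℚ, 0 ≤ q → 0 ≤ r → φ q = φ r → q = r) {q : ℚ} (hq : 0 ≤ q)
    {s : Multiset ℚ} (hs : ∀ r ∈ s, 0 ≤ r) (h : alphaCoeff φ s = (φ q : ℚ)⁻¹) : s = {q} := by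
  have hP : s.map φ = {φ q} := by
    refine Multiset.eq_singleton_of_sum_inv_eq_inv_prime ?_ (hφ q hq) ?_
    · simp only [Multiset.mem_map]
      rintro _ ⟨r, hr, rfl⟩
      exact hφ r (hs r hr)
    · simpa [alphaCoeff, Multiset.map_map, Function.comp_def] using h
  obtain ⟨r, rfl, hr⟩ := Multiset.map_eq_singleton.mp hP
  rw [hinj r q (hs r (Multiset.mem_singleton_self r)) hq hr]

theorem sAtom_gen (hα : 0 < α) (hirr : Irrational α) (hφ : ∀ q : ℚ, 0 ≤ q → (φ q).Prime)
    (hinj : ∀ q r : ℚ, 0 ≤ q → 0 ≤ r → φ q = φ r → q = r) {q : ℚ} (hq : 0 ≤ q) :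
    SAtom (M18 α φ) (gen α φ q) := by
  have hnu : ¬ SUnit (M18 α φ) (gen α φ q) := fun hu =>
    (nonpos_of_sUnit (fun _ => nonneg_of_mem hα) hu).not_gt (gen_pos hα hq (hφ q hq).pos)
  refine ⟨gen_mem hq, hnu, ?_⟩
  rintro _ hb _ hc hbc
  obtain ⟨qb, sb, hqb, hsb, rfl⟩ := exists_eq_ratCast_add_sum_gen hb
  obtain ⟨qc, sc, hqc, hsc, rfl⟩ := exists_eq_ratCast_add_sum_gen hc
  have hs : ∀ r ∈ sb + sc, 0 ≤ r := fun r hr => (Multiset.mem_add.mp hr).elim (hsb r) (hsc r)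
  obtain ⟨hα_coeff, hrat_coeff⟩ : alphaCoeff φ {q} = alphaCoeff φ (sb + sc) ∧
      ratCoeff φ {q} = qb + qc + ratCoeff φ (sb + sc) := by
    refine hirr.eq_of_ratCast_mul_add_eq ?_
    have hq_sum := sum_gen (α := α) (φ := φ) {q}
    have hbc_sum := sum_gen (α := α) (φ := φ) (sb + sc)
    simp only [Multiset.map_singleton, Multiset.sum_singleton, Multiset.map_add,
      Multiset.sum_add] at hq_sum hbc_sum
    push_cast
    linarith
  have hsbc : sb + sc = {q} :=
    eq_singleton_of_alphaCoeff_eq hφ hinj hq hs (by simpa [alphaCoeff] using hα_coeff.symm)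
  have hqbc : qb = 0 ∧ qc = 0 := by
    rw [hsbc] at hrat_coeff
    constructor <;> linarith
  have hcard : Multiset.card sb + Multiset.card sc = 1 := by
    simpa using congrArg Multiset.card hsbc
  rcases Nat.add_eq_one_iff.mp hcard with ⟨hb0, -⟩ | ⟨-, hc0⟩
  · left
    simpa [Multiset.card_eq_zero.mp hb0, hqbc.1] using sUnit_zero (S := M18 α φ) (zero_mem _)
  · right
    simpa [Multiset.card_eq_zero.mp hc0, hqbc.2] using sUnit_zero (S := M18 α φ) (zero_mem _)

theorem self_mem (hφ : ∀ q : ℚ, 0 ≤ q → (φ q).Prime) : α ∈ M18 α φ := by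
  have h := AddSubmonoid.nsmul_mem _ (gen_mem (α := α) (φ := φ) le_rfl) (φ 0)
  rwa [nsmul_gen (hφ 0 le_rfl).ne_zero, Rat.cast_zero, add_zero] at h

theorem exists_sAtoms_sum_eq_self_add (hα : 0 < α) (hirr : Irrational α)
    (hφ : ∀ q : ℚ, 0 ≤ q → (φ q).Prime)
    (hinj : ∀ q r : ℚ, 0 ≤ q → 0 ≤ r → φ q = φ r → q = r) {x : ℝ} (hx : x ∈ M18 α φ) :
    ∃ l : Multiset ℝ, (∀ a ∈ l, SAtom (M18 α φ) a) ∧ l.sum = α + x := by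
  obtain ⟨q, s, hq, hs, rfl⟩ := exists_eq_ratCast_add_sum_gen hx
  refine ⟨Multiset.replicate (φ q) (gen α φ q) + s.map (gen α φ), fun a ha => ?_, ?_⟩
  · rcases Multiset.mem_add.mp ha with ha | ha
    · rw [Multiset.eq_of_mem_replicate ha]
      exact sAtom_gen hα hirr hφ hinj hq
    · obtain ⟨r, hr, rfl⟩ := Multiset.mem_map.mp ha
      exact sAtom_gen hα hirr hφ hinj (hs r hr)
  · rw [Multiset.sum_add, Multiset.sum_replicate, nsmul_gen (hφ q hq).ne_zero, add_assoc]

theorem not_sAtom_ratCast (hα : 0 < α) (q : ℚ) : ¬ SAtom (M18 α φ) q := by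
  rintro ⟨hq, hnu, hsplit⟩
  have hq0 : 0 ≤ q := by exact_mod_cast nonneg_of_mem hα hq
  have hhalf : ((q / 2 : ℚ) : ℝ) ∈ M18 α φ := ratCast_mem (by positivity)
  have hq_le : (q / 2 : ℚ) ≤ (0 : ℝ) := by
    rcases hsplit _ hhalf _ hhalf (by push_cast; ring) with h | h <;>
      exact nonpos_of_sUnit (fun _ => nonneg_of_mem hα) h
  have hq_zero : (q : ℝ) = 0 := by
    push_cast at hq_le
    linarith [(Rat.cast_nonneg.mpr hq0 : (0 : ℝ) ≤ q)]
  exact hnu (hq_zero ▸ sUnit_zero (zero_mem _))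

theorem exists_alphaCoeff_pos_of_sAtom (hα : 0 < α) (hφ : ∀ q : ℚ, 0 ≤ q → (φ q).Prime)
    {a : ℝ} (ha : SAtom (M18 α φ) a) : ∃ c d : ℚ, 0 < c ∧ a = c * α + d := by
  obtain ⟨q, s, -, hs, rfl⟩ := exists_eq_ratCast_add_sum_gen ha.1
  rcases eq_or_ne s 0 with rfl | hs0
  · exact absurd (by simpa using ha) (not_sAtom_ratCast hα q)
  · refine ⟨alphaCoeff φ s, q + ratCoeff φ s, alphaCoeff_pos hφ hs hs0, ?_⟩
    rw [sum_gen]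
    push_cast
    ring

theorem not_exists_sAtoms_sum_eq_ratCast (hα : 0 < α) (hirr : Irrational α)
    (hφ : ∀ q : ℚ, 0 ≤ q → (φ q).Prime) {q : ℚ} (hq : (q : ℝ) ≠ 0) :
    ¬ ∃ l : Multiset ℝ, (∀ a ∈ l, SAtom (M18 α φ) a) ∧ l.sum = q := by
  rintro ⟨l, hl, hsum⟩
  have hl0 : l ≠ 0 := by
    rintro rfl
    exact hq (by simpa using hsum.symm)
  obtain ⟨c, d, hc, hcd⟩ : ∃ c d : ℚ, 0 < c ∧ l.sum = c * α + d := by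
    refine Multiset.sum_induction_nonempty _ ?_ (by simpa using hl0)
      fun a ha => exists_alphaCoeff_pos_of_sAtom hα hφ (hl a ha)
    rintro _ _ ⟨c, d, hc, rfl⟩ ⟨c', d', hc', rfl⟩
    exact ⟨c + c', d + d', add_pos hc hc', by push_cast; ring⟩
  have h := hirr.eq_of_ratCast_mul_add_eq (c' := 0) (d' := q) (by rw [← hcd, hsum]; simp)
  exact hc.ne' h.1

theorem not_sAtomic (hα : 0 < α) (hirr : Irrational α) (hφ : ∀ q : ℚ, 0 ≤ q → (φ q).Prime) :
    ¬ SAtomic (M18 α φ) := by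
  intro h
  rcases h 1 (by exact_mod_cast ratCast_mem zero_le_one) with hu | hl
  · linarith [nonpos_of_sUnit (fun _ => nonneg_of_mem hα) hu]
  · exact not_exists_sAtoms_sum_eq_ratCast hα hirr hφ (q := 1) (by simp) (by exact_mod_cast hl)

end M18

/-- For a positive irrational `α` and an injection `φ` from `ℚ_{≥0}` into the
primes, the monoid `M = ⟨q, (α + q)/φ(q) : q ∈ ℚ_{≥0}⟩` has each `(α + q)/φ(q)`
as an atom, is nearly atomic (with witness `α ∈ M`: for every `r ∈ M` the element
`α + r` is a finite sum of atoms), but is not atomic, since no nonzero rational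
element of `M` is a sum of atoms. -/
theorem nearly_atomic_not_atomic (α : ℝ) (hα : 0 < α) (hirr : Irrational α)
    (φ : ℚ → ℕ) (hφ : ∀ q : ℚ, 0 ≤ q → (φ q).Prime)
    (hinj : ∀ q r : ℚ, 0 ≤ q → 0 ≤ r → φ q = φ r → q = r) :
    (∀ q : ℚ, 0 ≤ q → SAtom (M18 α φ) ((α + (q : ℝ)) / (φ q : ℝ))) ∧
    α ∈ M18 α φ ∧
    (∀ r ∈ M18 α φ, ∃ l : Multiset ℝ,
      (∀ a ∈ l, SAtom (M18 α φ) a) ∧ l.sum = α + r) ∧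
    ¬ SAtomic (M18 α φ) ∧
    (∀ x ∈ M18 α φ, x ≠ 0 → (∃ q : ℚ, x = (q : ℝ)) →
      ¬ ∃ l : Multiset ℝ, (∀ a ∈ l, SAtom (M18 α φ) a) ∧ l.sum = x) := by
  refine ⟨fun q hq => M18.sAtom_gen hα hirr hφ hinj hq, M18.self_mem hφ,
    fun r hr => M18.exists_sAtoms_sum_eq_self_add hα hirr hφ hinj hr,
    M18.not_sAtomic hα hirr hφ, ?_⟩
  rintro _ - hx ⟨q, rfl⟩
  exact M18.not_exists_sAtoms_sum_eq_ratCast hα hirr hφ hx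
end
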